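/- arXiv:1605.08003 — 17 statements merged into one kernel-verified Lean document; each statement's English description precedes it below -/
import Mathlib

section
/- Let X ⊆ E be a nonempty convex set, let L > 0 and β > 0, and let f : E → ℝ be convex and L-Lipschitz on X. Then for every x ∈ X one has f^(β)(x) ≤ f(x) ≤ f^(β)(x) + L²/(2β). -/
open scoped RealInnerProductSpace

/-- For `f` convex and `L`-Lipschitz on a nonempty convex set `X`,
the `β`-Moreau envelope over `X` satisfies `f^(β)(x) ≤ f(x) ≤ f^(β)(x) + L²/(2β)`
for every `x ∈ X`. -/
theorem stmt_0 {d : ℕ} (X : Set (EuclideanSpace ℝ (Fin d)))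
    (hXne : X.Nonempty) (hXconv : Convex ℝ X)
    (L β : ℝ) (hL : 0 < L) (hβ : 0 < β)
    (f : EuclideanSpace ℝ (Fin d) → ℝ)
    (hconv : ConvexOn ℝ X f)
    (hlip : LipschitzOnWith (Real.toNNReal L) f X) :
    ∀ x ∈ X,
      (⨅ u : X, (f u + β / 2 * ‖x - (u : EuclideanSpace ℝ (Fin d))‖ ^ 2)) ≤ f x ∧
      f x ≤ (⨅ u : X, (f u + β / 2 * ‖x - (u : EuclideanSpace ℝ (Fin d))‖ ^ 2))
        + L ^ 2 / (2 * β) := by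
  intro x hx
  have key : ∀ u : X, f x - L ^ 2 / (2 * β) ≤
      f u + β / 2 * ‖x - (u : EuclideanSpace ℝ (Fin d))‖ ^ 2 := by
    intro ⟨u, hu⟩
    have hd := hlip.dist_le_mul x hx u hu
    rw [Real.coe_toNNReal _ hL.le] at hd
    have hdx : dist x u = ‖x - u‖ := dist_eq_norm x u
    have h1 : f x - f u ≤ L * ‖x - u‖ := by
      have := le_abs_self (f x - f u)
      calc f x - f u ≤ |f x - f u| := le_abs_self _
        _ = dist (f x) (f u) := (Real.dist_eq _ _).symm
        _ ≤ L * ‖x - u‖ := by rw [← hdx]; exact hd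
    have h2 : L * ‖x - u‖ ≤ β / 2 * ‖x - u‖ ^ 2 + L ^ 2 / (2 * β) := by
      rw [← sub_nonneg]
      have heq : β / 2 * ‖x - u‖ ^ 2 + L ^ 2 / (2 * β) - L * ‖x - u‖
          = (β * ‖x - u‖ - L) ^ 2 / (2 * β) := by field_simp; ring
      rw [heq]; positivity
    simp only
    linarith
  constructor
  · have hbdd : BddBelow (Set.range fun u : X =>
        f u + β / 2 * ‖x - (u : EuclideanSpace ℝ (Fin d))‖ ^ 2) :=
      ⟨f x - L ^ 2 / (2 * β), by rintro _ ⟨u, rfl⟩; exact key u⟩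
    have := ciInf_le hbdd (⟨x, hx⟩ : X)
    simpa using this
  · haveI : Nonempty X := hXne.to_subtype
    have h := le_ciInf key
    linarith
end

section
/- Let L > 0 and β > 0, let f : E → ℝ be convex and L-Lipschitz, and suppose p : E → E is a prox map for f with parameter β. Then for every x ∈ E the Moreau envelope f^(β) is differentiable at x with gradient β·(x − p(x)), i.e., HasGradientAt f^(β) (β·(x − p(x))) x. -/
open scoped RealInnerProductSpace

section aux

variable {d : ℕ}

local notation "E" => EuclideanSpace ℝ (Fin d)

/-- subgradient inequality at the prox point -/
lemma prox_subgrad {β : ℝ} (hβ : 0 < β) (f : E → ℝ)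
    (hconv : ConvexOn ℝ Set.univ f)
    (p : E → E)
    (hp : ∀ x u, f (p x) + β / 2 * ‖x - p x‖ ^ 2 ≤ f u + β / 2 * ‖x - u‖ ^ 2)
    (x v : E) : f (p x) + β * ⟪x - p x, v - p x⟫ ≤ f v := by
  have key : ∀ t : ℝ, 0 < t → t ≤ 1 →
      f (p x) + β * ⟪x - p x, v - p x⟫ ≤ f v + β * t / 2 * ‖v - p x‖ ^ 2 := by
    intro t ht ht1
    have hcv : f ((1 - t) • p x + t • v) ≤ (1 - t) * f (p x) + t * f v :=
      hconv.2 (Set.mem_univ _) (Set.mem_univ _) (by linarith) (le_of_lt ht) (by ring)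
    have h1 := hp x ((1 - t) • p x + t • v)
    have hxu : x - ((1 - t) • p x + t • v) = (x - p x) - t • (v - p x) := by
      module
    have hnorm : ‖x - ((1 - t) • p x + t • v)‖ ^ 2
        = ‖x - p x‖ ^ 2 - 2 * (t * ⟪x - p x, v - p x⟫) + t ^ 2 * ‖v - p x‖ ^ 2 := by
      rw [hxu, norm_sub_sq_real, real_inner_smul_right, norm_smul]
      simp only [Real.norm_eq_abs, mul_pow, sq_abs]
      try ring
    rw [hnorm] at h1
    nlinarith [h1, hcv, ht, sq_nonneg t]
  rcases le_or_gt (β / 2 * ‖v - p x‖ ^ 2) 0 with hc | hc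
  · have := key 1 one_pos le_rfl
    nlinarith [this]
  · refine le_of_forall_pos_le_add fun ε hε => ?_
    set t : ℝ := min 1 (ε / (β / 2 * ‖v - p x‖ ^ 2)) with htdef
    have htpos : 0 < t := lt_min one_pos (div_pos hε hc)
    have ht1 : t ≤ 1 := min_le_left _ _
    have h2 : t ≤ ε / (β / 2 * ‖v - p x‖ ^ 2) := min_le_right _ _
    have h3 : β * t / 2 * ‖v - p x‖ ^ 2 ≤ ε := by
      have := (le_div_iff₀ hc).mp h2
      nlinarith [this]
    have := key t htpos ht1
    linarith

/-- the prox map is nonexpansive -/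
lemma prox_nonexpansive {β : ℝ} (hβ : 0 < β) (f : E → ℝ)
    (hconv : ConvexOn ℝ Set.univ f)
    (p : E → E)
    (hp : ∀ x u, f (p x) + β / 2 * ‖x - p x‖ ^ 2 ≤ f u + β / 2 * ‖x - u‖ ^ 2)
    (x y : E) : ‖p x - p y‖ ≤ ‖x - y‖ := by
  have h1 := prox_subgrad hβ f hconv p hp x (p y)
  have h2 := prox_subgrad hβ f hconv p hp y (p x)
  have hadd : ⟪x - p x, p y - p x⟫ + ⟪y - p y, p x - p y⟫ ≤ 0 := by
    nlinarith [h1, h2, hβ]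
  have hexp : ‖p x - p y‖ ^ 2 ≤ ⟪x - y, p x - p y⟫ := by
    have e1 : ⟪x - p x, p y - p x⟫ = -⟪x - p x, p x - p y⟫ := by
      rw [← inner_neg_right]; congr 1; abel
    have e2 : ⟪y - p y, p x - p y⟫ = ⟪y, p x - p y⟫ - ⟪p y, p x - p y⟫ := by
      rw [inner_sub_left]
    have e3 : ⟪x - p x, p x - p y⟫ = ⟪x, p x - p y⟫ - ⟪p x, p x - p y⟫ := by
      rw [inner_sub_left]
    have e4 : ‖p x - p y‖ ^ 2 = ⟪p x, p x - p y⟫ - ⟪p y, p x - p y⟫ := by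
      rw [← real_inner_self_eq_norm_sq, inner_sub_left]
    have e5 : ⟪x - y, p x - p y⟫ = ⟪x, p x - p y⟫ - ⟪y, p x - p y⟫ := by
      rw [inner_sub_left]
    nlinarith [hadd]
  have hcs : ⟪x - y, p x - p y⟫ ≤ ‖x - y‖ * ‖p x - p y‖ := real_inner_le_norm _ _
  rcases eq_or_lt_of_le (norm_nonneg (p x - p y)) with h0 | h0
  · rw [← h0]; exact norm_nonneg _
  · nlinarith [hexp, hcs, h0]

end aux

/-- If `f` is convex and `L`-Lipschitz and `p` is a prox map for `f`
with parameter `β`, then the Moreau envelope `f^(β)` has gradient `β • (x - p x)`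
at every `x`. -/
theorem stmt_1 {d : ℕ} (L β : ℝ) (hL : 0 < L) (hβ : 0 < β)
    (f : EuclideanSpace ℝ (Fin d) → ℝ)
    (hconv : ConvexOn ℝ Set.univ f)
    (hlip : LipschitzWith (Real.toNNReal L) f)
    (p : EuclideanSpace ℝ (Fin d) → EuclideanSpace ℝ (Fin d))
    (hp : ∀ x u, f (p x) + β / 2 * ‖x - p x‖ ^ 2 ≤ f u + β / 2 * ‖x - u‖ ^ 2)
    (x : EuclideanSpace ℝ (Fin d)) :
    HasGradientAt (fun y => ⨅ u, (f u + β / 2 * ‖y - u‖ ^ 2)) (β • (x - p x)) x := by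
  have henv : ∀ y : EuclideanSpace ℝ (Fin d), (⨅ u, (f u + β / 2 * ‖y - u‖ ^ 2)) = f (p y) + β / 2 * ‖y - p y‖ ^ 2 := by
    intro y
    apply le_antisymm
    · exact ciInf_le ⟨f (p y) + β / 2 * ‖y - p y‖ ^ 2,
        fun v ⟨u, hu⟩ => hu ▸ hp y u⟩ (p y)
    · exact le_ciInf (hp y)
  rw [hasGradientAt_iff_isLittleO]
  have hbound : ∀ y : EuclideanSpace ℝ (Fin d),
      |(⨅ u, (f u + β / 2 * ‖y - u‖ ^ 2)) - (⨅ u, (f u + β / 2 * ‖x - u‖ ^ 2))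
        - ⟪β • (x - p x), y - x⟫| ≤ β * ‖y - x‖ ^ 2 := by
    intro y
    rw [henv y, henv x, real_inner_smul_left]
    have hupper : f (p y) + β / 2 * ‖y - p y‖ ^ 2
        ≤ f (p x) + β / 2 * ‖y - p x‖ ^ 2 := hp y (p x)
    have hlower : f (p x) + β / 2 * ‖x - p x‖ ^ 2
        ≤ f (p y) + β / 2 * ‖x - p y‖ ^ 2 := hp x (p y)
    have eU : ‖y - p x‖ ^ 2 = ‖x - p x‖ ^ 2 + 2 * ⟪x - p x, y - x⟫ + ‖y - x‖ ^ 2 := by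
      have : y - p x = (x - p x) + (y - x) := by abel
      rw [this, norm_add_sq_real]; try ring
    have eL : ‖x - p y‖ ^ 2 = ‖y - p y‖ ^ 2 - 2 * ⟪y - p y, y - x⟫ + ‖y - x‖ ^ 2 := by
      have : x - p y = (y - p y) - (y - x) := by abel
      rw [this, norm_sub_sq_real]; try ring
    have hup : f (p y) + β / 2 * ‖y - p y‖ ^ 2 - (f (p x) + β / 2 * ‖x - p x‖ ^ 2)
        - β * ⟪x - p x, y - x⟫ ≤ β / 2 * ‖y - x‖ ^ 2 := by
      rw [eU] at hupper; linarith
    have hlow : β * ⟪y - x, p x - p y⟫ + β / 2 * ‖y - x‖ ^ 2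
        ≤ f (p y) + β / 2 * ‖y - p y‖ ^ 2 - (f (p x) + β / 2 * ‖x - p x‖ ^ 2)
          - β * ⟪x - p x, y - x⟫ := by
      rw [eL] at hlower
      have e6 : ⟪y - p y, y - x⟫ = ⟪x - p x, y - x⟫ + ⟪y - x, y - x⟫
          + ⟪p x - p y, y - x⟫ := by
        rw [← inner_add_left, ← inner_add_left]
        congr 1; abel
      have e7 : ⟪y - x, y - x⟫ = ‖y - x‖ ^ 2 := real_inner_self_eq_norm_sq _
      have e8 : ⟪p x - p y, y - x⟫ = ⟪y - x, p x - p y⟫ := real_inner_comm _ _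
      rw [e6, e7, e8] at hlower
      linarith
    have hcs : |⟪y - x, p x - p y⟫| ≤ ‖y - x‖ ^ 2 := by
      calc |⟪y - x, p x - p y⟫| ≤ ‖y - x‖ * ‖p x - p y‖ := abs_real_inner_le_norm _ _
        _ ≤ ‖y - x‖ * ‖x - y‖ :=
            mul_le_mul_of_nonneg_left (prox_nonexpansive hβ f hconv p hp x y) (norm_nonneg _)
        _ = ‖y - x‖ ^ 2 := by rw [norm_sub_rev x y]; ring
    rw [abs_le]
    constructor
    · have := (abs_le.mp hcs).1
      nlinarith [hlow, hβ]
    · nlinarith [hup, hβ, sq_nonneg ‖y - x‖]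
  rw [Asymptotics.isLittleO_iff]
  intro c hc
  rw [Metric.eventually_nhds_iff]
  refine ⟨c / β, div_pos hc hβ, fun y hy => ?_⟩
  have hdy : ‖y - x‖ < c / β := by
    rw [← dist_eq_norm]; exact hy
  have h1 : β * ‖y - x‖ ≤ c := by
    rcases (norm_nonneg (y - x)).eq_or_lt with h0 | h0
    · rw [← h0]; simpa using le_of_lt hc
    · nlinarith [(lt_div_iff₀ hβ).mp hdy]
  calc ‖(⨅ u, (f u + β / 2 * ‖y - u‖ ^ 2)) - (⨅ u, (f u + β / 2 * ‖x - u‖ ^ 2))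
        - ⟪β • (x - p x), y - x⟫‖ ≤ β * ‖y - x‖ ^ 2 := by
          rw [Real.norm_eq_abs]; exact hbound y
    _ = (β * ‖y - x‖) * ‖y - x‖ := by ring
    _ ≤ c * ‖y - x‖ := mul_le_mul_of_nonneg_right h1 (norm_nonneg _)
    _ = c * ‖y - x‖ := rfl
end

section
/- Let L > 0 and β > 0, let f : E → ℝ be convex and L-Lipschitz, and suppose p : E → E is a prox map for f with parameter β. Then the gradient map x ↦ β·(x − p(x)) of the Moreau envelope f^(β) is Lipschitz continuous with constant β; that is, f^(β) is β-smooth. -/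
open scoped RealInnerProductSpace

lemma prox_one_sided {d : ℕ} (β : ℝ) (hβ : 0 < β)
    (f : EuclideanSpace ℝ (Fin d) → ℝ)
    (hconv : ConvexOn ℝ Set.univ f)
    (p : EuclideanSpace ℝ (Fin d) → EuclideanSpace ℝ (Fin d))
    (hp : ∀ x u, f (p x) + β / 2 * ‖x - p x‖ ^ 2 ≤ f u + β / 2 * ‖x - u‖ ^ 2)
    (x y : EuclideanSpace ℝ (Fin d)) (t : ℝ) (ht : 0 < t) (ht1 : t ≤ 1) :
    β * ⟪x - p x, p y - p x⟫ ≤ (f (p y) - f (p x)) + β * t / 2 * ‖p y - p x‖ ^ 2 := by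
  set u := p x with hu
  set v := p y with hv
  have hw := hp x ((1 - t) • u + t • v)
  have hc : f ((1 - t) • u + t • v) ≤ (1 - t) * f u + t * f v :=
    hconv.2 (Set.mem_univ u) (Set.mem_univ v) (by linarith) ht.le (by ring)
  have hrw : x - ((1 - t) • u + t • v) = (x - u) - t • (v - u) := by
    module
  have hnorm : ‖x - ((1 - t) • u + t • v)‖ ^ 2
      = ‖x - u‖ ^ 2 - 2 * t * ⟪x - u, v - u⟫ + t ^ 2 * ‖v - u‖ ^ 2 := by
    rw [hrw, norm_sub_sq_real, real_inner_smul_right, norm_smul]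
    simp [mul_pow, abs_of_pos ht]
    ring
  have hvu : ⟪x - u, v - u⟫ = ⟪x - u, v - u⟫ := rfl
  rw [hnorm] at hw
  -- from hw and hc: β * t * ⟪x-u, v-u⟫ ≤ t*(f v - f u) + β*t^2/2*‖v-u‖^2
  have key : β * t * ⟪x - u, v - u⟫ ≤ t * (f v - f u) + β * t ^ 2 / 2 * ‖v - u‖ ^ 2 := by
    nlinarith [hw, hc]
  have := mul_le_mul_of_nonneg_left key (le_of_lt (by positivity : (0:ℝ) < 1 / t))
  have hcomm : ⟪x - u, v - u⟫ = ⟪x - u, v - u⟫ := rfl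
  calc β * ⟪x - u, v - u⟫ = (1 / t) * (β * t * ⟪x - u, v - u⟫) := by field_simp
    _ ≤ (1 / t) * (t * (f v - f u) + β * t ^ 2 / 2 * ‖v - u‖ ^ 2) := this
    _ = (f v - f u) + β * t / 2 * ‖v - u‖ ^ 2 := by field_simp

/-- If `f` is convex and `L`-Lipschitz and `p` is a prox map for `f`
with parameter `β`, then the gradient map `x ↦ β • (x - p x)` of the Moreau
envelope `f^(β)` is `β`-Lipschitz, i.e. `f^(β)` is `β`-smooth. -/
theorem stmt_2 {d : ℕ} (L β : ℝ) (hL : 0 < L) (hβ : 0 < β)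
    (f : EuclideanSpace ℝ (Fin d) → ℝ)
    (hconv : ConvexOn ℝ Set.univ f)
    (hlip : LipschitzWith (Real.toNNReal L) f)
    (p : EuclideanSpace ℝ (Fin d) → EuclideanSpace ℝ (Fin d))
    (hp : ∀ x u, f (p x) + β / 2 * ‖x - p x‖ ^ 2 ≤ f u + β / 2 * ‖x - u‖ ^ 2) :
    LipschitzWith (Real.toNNReal β) (fun x => β • (x - p x)) := by
  have firm : ∀ x y : EuclideanSpace ℝ (Fin d),
      ‖p x - p y‖ ^ 2 ≤ ⟪x - y, p x - p y⟫ := by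
    intro x y
    set u := p x with hu
    set v := p y with hv
    have step : ∀ t : ℝ, 0 < t → t ≤ 1 →
        ‖u - v‖ ^ 2 - ⟪x - y, u - v⟫ ≤ t * ‖u - v‖ ^ 2 := by
      intro t ht ht1
      have h1 := prox_one_sided β hβ f hconv p hp x y t ht ht1
      have h2 := prox_one_sided β hβ f hconv p hp y x t ht ht1
      have hsum : β * (⟪x - u, v - u⟫ + ⟪y - v, u - v⟫)
          ≤ β * t * ‖u - v‖ ^ 2 := by
        have hn : ‖v - u‖ = ‖u - v‖ := norm_sub_rev _ _
        simp only [← hu, ← hv] at h1 h2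
        rw [hn] at h1
        nlinarith [h1, h2]
      have hid : ⟪x - u, v - u⟫ + ⟪y - v, u - v⟫
          = ‖u - v‖ ^ 2 - ⟪x - y, u - v⟫ := by
        have h1 : (⟪x - u, v - u⟫ : ℝ) = ⟪x, v⟫ - ⟪x, u⟫ - ⟪u, v⟫ + ⟪u, u⟫ := by
          simp [inner_sub_left, inner_sub_right]; ring
        have h2 : (⟪y - v, u - v⟫ : ℝ) = ⟪y, u⟫ - ⟪y, v⟫ - ⟪v, u⟫ + ⟪v, v⟫ := by
          simp [inner_sub_left, inner_sub_right]; ring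
        have h3 : ‖u - v‖ ^ 2 = ⟪u, u⟫ - 2 * ⟪u, v⟫ + ⟪v, v⟫ := by
          rw [← real_inner_self_eq_norm_sq]
          simp only [inner_sub_left, inner_sub_right, real_inner_comm u v]; ring
        have h4 : (⟪x - y, u - v⟫ : ℝ) = ⟪x, u⟫ - ⟪x, v⟫ - ⟪y, u⟫ + ⟪y, v⟫ := by
          simp [inner_sub_left, inner_sub_right]; ring
        have h5 : (⟪v, u⟫ : ℝ) = ⟪u, v⟫ := real_inner_comm u v
        rw [h1, h2, h3, h4, h5]; ring
      rw [hid] at hsum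
      nlinarith [hsum]
    have hC : (0:ℝ) ≤ ‖u - v‖ ^ 2 := by positivity
    by_contra h
    push_neg at h
    set B := ‖u - v‖ ^ 2 - ⟪x - y, u - v⟫ with hB
    have hBpos : 0 < B := by simp only [hB]; linarith
    have hCpos : 0 < ‖u - v‖ ^ 2 := by
      rcases hC.lt_or_eq with h' | h'
      · exact h'
      · exfalso; have := step 1 one_pos le_rfl; rw [← h'] at this
        simp only [hB] at hBpos; linarith [this]
    have hkey := step (B / (2 * ‖u - v‖ ^ 2)) (by positivity)
      (by
        have : B ≤ 1 * ‖u - v‖ ^ 2 := step 1 one_pos le_rfl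
        rw [div_le_one (by positivity)]; nlinarith)
    have : B ≤ B / 2 := by
      calc B ≤ (B / (2 * ‖u - v‖ ^ 2)) * ‖u - v‖ ^ 2 := hkey
        _ = B / 2 := by rw [div_mul_eq_mul_div, mul_div_mul_right _ _ hCpos.ne']
    linarith
  apply LipschitzWith.of_dist_le_mul
  intro x y
  have hβc : (Real.toNNReal β : ℝ) = β := Real.coe_toNNReal β hβ.le
  rw [dist_eq_norm, dist_eq_norm, hβc]
  have hre : β • (x - p x) - β • (y - p y) = β • ((x - y) - (p x - p y)) := by
    module
  rw [hre, norm_smul, Real.norm_eq_abs, abs_of_pos hβ]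
  have hfirm := firm x y
  have hexp : ‖(x - y) - (p x - p y)‖ ^ 2
      = ‖x - y‖ ^ 2 - 2 * ⟪x - y, p x - p y⟫ + ‖p x - p y‖ ^ 2 := by
    rw [norm_sub_sq_real]
  have h1 : ‖(x - y) - (p x - p y)‖ ≤ ‖x - y‖ := by
    nlinarith [norm_nonneg ((x - y) - (p x - p y)), norm_nonneg (x - y), hexp, hfirm]
  exact mul_le_mul_of_nonneg_left h1 hβ.le
end

section
/- Let k ≥ 1 and m ≥ 2 be integers, let v_0, v_1, …, v_k be orthonormal vectors in E, set b = 1/√(k+1), and define F(x) = (1/√2)·|b − ⟨x,v₀⟩| + (⌊m/2⌋/(2m√k))·Σ_{r=1}^k |⟨x,v_{r−1}⟩ − ⟨x,v_r⟩|. Then F(x) ≥ 0 for all x, the point x_b := b·Σ_{r=0}^k v_r satisfies ‖x_b‖ = 1 and F(x_b) = 0, and every x ∈ E with ⟨x, v_k⟩ = 0 satisfies F(x) ≥ b/(6√k) ≥ 1/(12k). -/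
open scoped RealInnerProductSpace

/-- For the non-smooth deterministic lower-bound construction
`F(x) = (1/√2)|b - ⟨x,v₀⟩| + (⌊m/2⌋/(2m√k)) Σ_{r=1}^k |⟨x,v_{r-1}⟩ - ⟨x,v_r⟩|`
with `b = 1/√(k+1)`: `F ≥ 0`, the point `x_b = b Σ_{r=0}^k v_r` is a unit-norm
global minimizer with `F(x_b) = 0`, and every `x` with `⟨x, v_k⟩ = 0` satisfies
`F(x) ≥ b/(6√k) ≥ 1/(12k)`. -/
theorem stmt_5 {d : ℕ} (k m : ℕ) (hk : 1 ≤ k) (hm : 2 ≤ m)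
    (v : ℕ → EuclideanSpace ℝ (Fin d))
    (hnorm : ∀ i ≤ k, ‖v i‖ = 1)
    (horth : ∀ i ≤ k, ∀ j ≤ k, i ≠ j → ⟪v i, v j⟫ = 0)
    (b : ℝ) (hb : b = 1 / Real.sqrt (k + 1))
    (F : EuclideanSpace ℝ (Fin d) → ℝ)
    (hF : ∀ x, F x = (1 / Real.sqrt 2) * |b - ⟪x, v 0⟫| +
      (((m / 2 : ℕ) : ℝ) / (2 * m * Real.sqrt k)) *
        ∑ r ∈ Finset.Icc 1 k, |⟪x, v (r - 1)⟫ - ⟪x, v r⟫|) :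
    (∀ x, 0 ≤ F x) ∧
    ‖b • ∑ r ∈ Finset.range (k + 1), v r‖ = 1 ∧
    F (b • ∑ r ∈ Finset.range (k + 1), v r) = 0 ∧
    (∀ x : EuclideanSpace ℝ (Fin d), ⟪x, v k⟫ = 0 →
      F x ≥ b / (6 * Real.sqrt k)) ∧
    b / (6 * Real.sqrt k) ≥ 1 / (12 * k) := by
  have hk1 : (1:ℝ) ≤ (k:ℝ) := by exact_mod_cast hk
  have hskpos : 0 < Real.sqrt k := Real.sqrt_pos.mpr (by linarith)
  have hsk1 : 1 ≤ Real.sqrt k := by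
    rw [show (1:ℝ) = Real.sqrt 1 by simp]
    exact Real.sqrt_le_sqrt hk1
  have hsk1pos : 0 < Real.sqrt ((k:ℝ) + 1) := Real.sqrt_pos.mpr (by linarith)
  have hbpos : 0 < b := by rw [hb]; positivity
  have hmpos : 0 < (m:ℝ) := by exact_mod_cast (by omega : 0 < m)
  have hc2nn : 0 ≤ (((m / 2 : ℕ) : ℝ) / (2 * m * Real.sqrt k)) := by positivity
  have hdiag : ∀ j ≤ k, ⟪v j, v j⟫ = 1 := by
    intro j hj
    rw [real_inner_self_eq_norm_sq, hnorm j hj]; norm_num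
  set S := ∑ r ∈ Finset.range (k + 1), v r with hS
  have hSin : ∀ j ≤ k, ⟪S, v j⟫ = 1 := by
    intro j hj
    rw [hS, sum_inner]
    rw [Finset.sum_eq_single j]
    · exact hdiag j hj
    · intro i hi hne
      exact horth i (by simpa using Nat.lt_succ_iff.mp (Finset.mem_range.mp hi)) j hj hne
    · intro h; exact absurd (Finset.mem_range.mpr (Nat.lt_succ_of_le hj)) h
  have hxb : ∀ j ≤ k, ⟪b • S, v j⟫ = b := by
    intro j hj
    rw [real_inner_smul_left, hSin j hj, mul_one]
  have hSS : ⟪S, S⟫ = (k:ℝ) + 1 := by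
    have h1 : ⟪S, S⟫ = ∑ r ∈ Finset.range (k + 1), ⟪S, v r⟫ := inner_sum _ _ _
    rw [h1, Finset.sum_congr rfl
      (fun i hi => hSin i (Nat.lt_succ_iff.mp (Finset.mem_range.mp hi)))]
    simp
  have hnS : ‖S‖ = Real.sqrt ((k:ℝ) + 1) := by
    have h2 : ‖S‖ ^ 2 = (k:ℝ) + 1 := by rw [← real_inner_self_eq_norm_sq, hSS]
    rw [← h2, Real.sqrt_sq (norm_nonneg _)]
  -- Part 1: nonnegativity
  have part1 : ∀ x, 0 ≤ F x := by
    intro x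
    rw [hF]
    have h1 : (0:ℝ) ≤ |b - ⟪x, v 0⟫| := abs_nonneg _
    have h2 : (0:ℝ) ≤ ∑ r ∈ Finset.Icc 1 k, |⟪x, v (r - 1)⟫ - ⟪x, v r⟫| :=
      Finset.sum_nonneg fun r _ => abs_nonneg _
    positivity
  -- Part 2: unit norm
  have part2 : ‖b • S‖ = 1 := by
    rw [norm_smul, hnS, Real.norm_eq_abs, abs_of_pos hbpos, hb]
    field_simp
  -- Part 3: F x_b = 0
  have part3 : F (b • S) = 0 := by
    rw [hF, hxb 0 (Nat.zero_le k), sub_self, abs_zero, mul_zero,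
      Finset.sum_eq_zero (fun r hr => by
        obtain ⟨hr1, hr2⟩ := Finset.mem_Icc.mp hr
        rw [hxb (r-1) (le_trans (Nat.sub_le r 1) hr2), hxb r hr2, sub_self, abs_zero]),
      mul_zero, add_zero]
  refine ⟨part1, part2, part3, ?_, ?_⟩
  · -- Part 4
    intro x hx
    rw [hF]
    set g : ℕ → ℝ := fun r => ⟪x, v r⟫ with hg
    set A := |b - g 0| with hA
    set B := ∑ r ∈ Finset.Icc 1 k, |g (r-1) - g r| with hB
    have htel : ∀ n : ℕ, ∑ r ∈ Finset.Icc 1 n, (g (r-1) - g r) = g 0 - g n := by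
      intro n
      induction n with
      | zero => simp
      | succ n ih =>
        rw [Finset.sum_Icc_succ_top (by omega : 1 ≤ n + 1), ih]
        simp only [Nat.add_sub_cancel]
        ring
    have hgk : g k = 0 := hx
    have hbA : b ≤ A + B := by
      have h1 : b = (b - g 0) + ∑ r ∈ Finset.Icc 1 k, (g (r-1) - g r) := by
        rw [htel k, hgk]; ring
      calc b = (b - g 0) + ∑ r ∈ Finset.Icc 1 k, (g (r-1) - g r) := h1
        _ ≤ |b - g 0| + |∑ r ∈ Finset.Icc 1 k, (g (r-1) - g r)| :=
            add_le_add (le_abs_self _) (le_abs_self _)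
        _ ≤ A + B := by
            rw [hA]
            exact add_le_add le_rfl (Finset.abs_sum_le_sum_abs _ _)
    have hAnn : 0 ≤ A := abs_nonneg _
    have hBnn : 0 ≤ B := Finset.sum_nonneg fun r _ => abs_nonneg _
    set c : ℝ := 1 / (6 * Real.sqrt k) with hc
    have hcpos : 0 < c := by rw [hc]; positivity
    have hc1 : c ≤ 1 / Real.sqrt 2 := by
      rw [hc]
      apply one_div_le_one_div_of_le
      · exact Real.sqrt_pos.mpr (by norm_num)
      · have hs2 : Real.sqrt 2 ≤ 2 := by
          nlinarith [Real.sq_sqrt (by norm_num : (0:ℝ) ≤ 2), Real.sqrt_nonneg 2]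
        linarith
    have h3m : (m:ℝ) ≤ 3 * ((m / 2 : ℕ) : ℝ) := by
      have : m ≤ 3 * (m / 2) := by omega
      exact_mod_cast this
    have hc2 : c ≤ ((m / 2 : ℕ) : ℝ) / (2 * m * Real.sqrt k) := by
      rw [hc, div_le_div_iff₀ (by positivity) (by positivity)]
      nlinarith [hskpos, hmpos]
    calc (1 / Real.sqrt 2) * A + (((m / 2 : ℕ) : ℝ) / (2 * m * Real.sqrt k)) * B
        ≥ c * A + c * B :=
          add_le_add (mul_le_mul_of_nonneg_right hc1 hAnn)
            (mul_le_mul_of_nonneg_right hc2 hBnn)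
      _ = c * (A + B) := by ring
      _ ≥ c * b := mul_le_mul_of_nonneg_left hbA (le_of_lt hcpos)
      _ = b / (6 * Real.sqrt k) := by rw [hc]; ring
  · -- Part 5
    rw [hb, div_div, ge_iff_le]
    apply one_div_le_one_div_of_le
    · positivity
    · have hmul : Real.sqrt ((k:ℝ)+1) * Real.sqrt k = Real.sqrt (((k:ℝ)+1) * k) :=
        (Real.sqrt_mul (by linarith) _).symm
      have hle : Real.sqrt (((k:ℝ)+1) * k) ≤ 2 * k := by
        rw [show (2:ℝ) * k = Real.sqrt ((2*(k:ℝ))^2) by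
          rw [Real.sqrt_sq (by linarith)]]
        exact Real.sqrt_le_sqrt (by nlinarith)
      calc Real.sqrt ((k:ℝ)+1) * (6 * Real.sqrt k)
          = 6 * (Real.sqrt ((k:ℝ)+1) * Real.sqrt k) := by ring
        _ = 6 * Real.sqrt (((k:ℝ)+1) * k) := by rw [hmul]
        _ ≤ 6 * (2 * k) := by linarith
        _ = 12 * k := by ring
end

section
/- Let 1 ≤ t ≤ k with δ_t = 0, and let x ∈ E satisfy ⟨x, v_r⟩ = 0 for all r with t ≤ r ≤ k. Then every subgradient of the truncation f^t at x is a subgradient of f at x: if g ∈ E satisfies f^t(y) ≥ f^t(x) + ⟨g, y − x⟩ for all y ∈ E, then f(y) ≥ f(x) + ⟨g, y − x⟩ for all y ∈ E. -/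
open scoped RealInnerProductSpace

/-- For the non-smooth construction `f` and its truncation `f^t`, if
`δ_t = 0` and `⟨x, v_r⟩ = 0` for all `t ≤ r ≤ k`, then every subgradient of `f^t`
at `x` is also a subgradient of `f` at `x`. -/
theorem stmt_6 {d : ℕ} (k : ℕ) (hk : 1 ≤ k)
    (v : ℕ → EuclideanSpace ℝ (Fin d))
    (hnorm : ∀ i ≤ k, ‖v i‖ = 1)
    (horth : ∀ i ≤ k, ∀ j ≤ k, i ≠ j → ⟪v i, v j⟫ = 0)
    (b : ℝ) (δ : ℕ → ℝ)
    (hδ : ∀ r, 1 ≤ r → r ≤ k → δ r = 0 ∨ δ r = 1)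
    (t : ℕ) (ht1 : 1 ≤ t) (htk : t ≤ k) (hδt : δ t = 0)
    (f ft : EuclideanSpace ℝ (Fin d) → ℝ)
    (hf : ∀ x, f x = (1 / Real.sqrt 2) * |b - ⟪x, v 0⟫| +
      (1 / (2 * Real.sqrt k)) *
        ∑ r ∈ Finset.Icc 1 k, δ r * |⟪x, v (r - 1)⟫ - ⟪x, v r⟫|)
    (hft : ∀ x, ft x = (1 / Real.sqrt 2) * |b - ⟪x, v 0⟫| +
      (1 / (2 * Real.sqrt k)) *
        ∑ r ∈ Finset.Icc 1 (t - 1), δ r * |⟪x, v (r - 1)⟫ - ⟪x, v r⟫|)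
    (x : EuclideanSpace ℝ (Fin d))
    (hx : ∀ r, t ≤ r → r ≤ k → ⟪x, v r⟫ = 0)
    (g : EuclideanSpace ℝ (Fin d))
    (hg : ∀ y, ft y ≥ ft x + ⟪g, y - x⟫) :
    ∀ y, f y ≥ f x + ⟪g, y - x⟫ := by
  intro y
  have hc : (0:ℝ) ≤ 1 / (2 * Real.sqrt k) := by positivity
  have hsplit : ∀ z : EuclideanSpace ℝ (Fin d),
      ∑ r ∈ Finset.Icc 1 k, δ r * |⟪z, v (r - 1)⟫ - ⟪z, v r⟫|
      = (∑ r ∈ Finset.Icc 1 (t - 1), δ r * |⟪z, v (r - 1)⟫ - ⟪z, v r⟫|)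
      + ∑ r ∈ Finset.Ioc (t - 1) k, δ r * |⟪z, v (r - 1)⟫ - ⟪z, v r⟫| := by
    intro z
    rw [show Finset.Icc 1 k = Finset.Ioc 0 k from Finset.Icc_add_one_left_eq_Ioc 0 k,
        show Finset.Icc 1 (t - 1) = Finset.Ioc 0 (t - 1) from Finset.Icc_add_one_left_eq_Ioc 0 (t - 1)]
    exact (Finset.sum_Ioc_consecutive _ (Nat.zero_le _) (le_trans (Nat.sub_le t 1) htk)).symm
  -- properties of members of the tail
  have hmem : ∀ r ∈ Finset.Ioc (t - 1) k, t ≤ r ∧ r ≤ k := by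
    intro r hr
    rw [Finset.mem_Ioc] at hr
    exact ⟨Nat.le_of_pred_lt hr.1, hr.2⟩
  have htail0 : ∑ r ∈ Finset.Ioc (t - 1) k, δ r * |⟪x, v (r - 1)⟫ - ⟪x, v r⟫| = 0 := by
    apply Finset.sum_eq_zero
    intro r hr
    obtain ⟨h1, h2⟩ := hmem r hr
    rcases eq_or_lt_of_le h1 with h | h
    · rw [← h, hδt, zero_mul]
    · rw [hx (r - 1) (Nat.le_sub_one_of_lt h) (le_trans (Nat.sub_le r 1) h2),
        hx r h1 h2, sub_zero, abs_zero, mul_zero]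
  have htailpos : (0:ℝ) ≤ ∑ r ∈ Finset.Ioc (t - 1) k, δ r * |⟪y, v (r - 1)⟫ - ⟪y, v r⟫| := by
    apply Finset.sum_nonneg
    intro r hr
    obtain ⟨h1, h2⟩ := hmem r hr
    have : 0 ≤ δ r := by
      rcases hδ r (le_trans ht1 h1) h2 with h | h <;> rw [h] <;> norm_num
    positivity
  have hfx : f x = ft x := by
    rw [hf, hft, hsplit, htail0, add_zero]
  have hfy : ft y ≤ f y := by
    rw [hf, hft, hsplit]
    have := mul_le_mul_of_nonneg_left htailpos hc
    nlinarith
  calc f x + ⟪g, y - x⟫ = ft x + ⟪g, y - x⟫ := by rw [hfx]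
    _ ≤ ft y := hg y
    _ ≤ f y := hfy
end

section
/- Let 1 ≤ t ≤ k with δ_t = 0, and let x ∈ E satisfy ⟨x, v_r⟩ = 0 for all r with t ≤ r ≤ k. Then for every β > 0 and every u ∈ E, u minimizes w ↦ f^t(w) + (β/2)‖x − w‖² over E if and only if u minimizes w ↦ f(w) + (β/2)‖x − w‖² over E; in particular the prox of f^t at x coincides with the prox of f at x. -/
open scoped RealInnerProductSpace

/-- For the non-smooth construction `f` and its truncation `f^t`, if
`δ_t = 0` and `⟨x, v_r⟩ = 0` for all `t ≤ r ≤ k`, then for every `β > 0` a point `u`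
minimizes `w ↦ f^t(w) + (β/2)‖x - w‖²` over `E` iff it minimizes
`w ↦ f(w) + (β/2)‖x - w‖²` over `E`; in particular the proxs of `f^t` and `f`
at `x` coincide. -/
theorem stmt_7 {d : ℕ} (k : ℕ) (hk : 1 ≤ k)
    (v : ℕ → EuclideanSpace ℝ (Fin d))
    (hnorm : ∀ i ≤ k, ‖v i‖ = 1)
    (horth : ∀ i ≤ k, ∀ j ≤ k, i ≠ j → ⟪v i, v j⟫ = 0)
    (b : ℝ) (δ : ℕ → ℝ)
    (hδ : ∀ r, 1 ≤ r → r ≤ k → δ r = 0 ∨ δ r = 1)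
    (t : ℕ) (ht1 : 1 ≤ t) (htk : t ≤ k) (hδt : δ t = 0)
    (f ft : EuclideanSpace ℝ (Fin d) → ℝ)
    (hf : ∀ x, f x = (1 / Real.sqrt 2) * |b - ⟪x, v 0⟫| +
      (1 / (2 * Real.sqrt k)) *
        ∑ r ∈ Finset.Icc 1 k, δ r * |⟪x, v (r - 1)⟫ - ⟪x, v r⟫|)
    (hft : ∀ x, ft x = (1 / Real.sqrt 2) * |b - ⟪x, v 0⟫| +
      (1 / (2 * Real.sqrt k)) *
        ∑ r ∈ Finset.Icc 1 (t - 1), δ r * |⟪x, v (r - 1)⟫ - ⟪x, v r⟫|)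
    (x : EuclideanSpace ℝ (Fin d))
    (hx : ∀ r, t ≤ r → r ≤ k → ⟪x, v r⟫ = 0) :
    ∀ β > (0 : ℝ), ∀ u : EuclideanSpace ℝ (Fin d),
      (IsMinOn (fun w => ft w + β / 2 * ‖x - w‖ ^ 2) Set.univ u ↔
       IsMinOn (fun w => f w + β / 2 * ‖x - w‖ ^ 2) Set.univ u) := by
  intro β hβ u
  have hk0 : (0:ℝ) < Real.sqrt k := Real.sqrt_pos.2 (by exact_mod_cast hk)
  have hc0 : (0:ℝ) < 1 / (2 * Real.sqrt k) := by positivity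
  -- orthonormality
  have hvv : ∀ i ≤ k, ∀ j ≤ k, ⟪v i, v j⟫ = if i = j then 1 else 0 := by
    intro i hi j hj
    by_cases h : i = j
    · subst h
      rw [if_pos rfl, real_inner_self_eq_norm_sq, hnorm i hi]
      norm_num
    · simp [h, horth i hi j hj h]
  set S := Finset.Icc t k with hS
  set P : EuclideanSpace ℝ (Fin d) → EuclideanSpace ℝ (Fin d) :=
    fun w => w - ∑ r ∈ S, ⟪w, v r⟫ • v r with hP
  have hPinner : ∀ w, ∀ j ≤ k, ⟪P w, v j⟫ = if j < t then ⟪w, v j⟫ else 0 := by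
    intro w j hj
    have hsum : ⟪∑ r ∈ S, ⟪w, v r⟫ • v r, v j⟫
        = ∑ r ∈ S, ⟪w, v r⟫ * ⟪v r, v j⟫ := by
      rw [sum_inner]
      simp only [real_inner_smul_left]
    have hterm : ∀ r ∈ S, ⟪w, v r⟫ * ⟪v r, v j⟫
        = if r = j then ⟪w, v j⟫ else 0 := by
      intro r hr
      rw [Finset.mem_Icc] at hr
      rw [hvv r (le_trans hr.2 le_rfl) j hj]
      by_cases h : r = j <;> simp [h]
    rw [hP]
    simp only [inner_sub_left, hsum, Finset.sum_congr rfl hterm,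
      Finset.sum_ite_eq' S j (fun _ => ⟪w, v j⟫)]
    by_cases h : j < t
    · have : j ∉ S := by
        rw [hS, Finset.mem_Icc]; omega
      simp [this, h]
    · have : j ∈ S := by
        rw [hS, Finset.mem_Icc]; omega
      simp [this, h]
  have hPzero : ∀ w, ∀ r, t ≤ r → r ≤ k → ⟪P w, v r⟫ = 0 := by
    intro w r h1 h2
    rw [hPinner w r h2, if_neg (Nat.not_lt.2 h1)]
  -- norm decomposition
  have hdecomp : ∀ w, ‖x - w‖ ^ 2
      = ‖x - P w‖ ^ 2 + ‖∑ r ∈ S, ⟪w, v r⟫ • v r‖ ^ 2 := by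
    intro w
    set z := ∑ r ∈ S, ⟪w, v r⟫ • v r with hz
    have hxw : x - w = (x - P w) - z := by
      show x - w = x - (w - z) - z; abel
    have hinner : ⟪x - P w, z⟫ = 0 := by
      rw [hz, inner_sum]
      apply Finset.sum_eq_zero
      intro r hr
      rw [Finset.mem_Icc] at hr
      rw [real_inner_smul_right, inner_sub_left, hx r hr.1 hr.2,
        hPzero w r hr.1 hr.2]
      ring
    rw [hxw, norm_sub_sq_real, hinner]
    ring
  -- sum splitting : f = ft + tail
  have hsplit : ∀ w, f w = ft w + (1 / (2 * Real.sqrt k)) *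
      ∑ r ∈ Finset.Ico t (k+1), δ r * |⟪w, v (r - 1)⟫ - ⟪w, v r⟫| := by
    intro w
    rw [hf, hft]
    have h1 : Finset.Icc 1 (t-1) = Finset.Ico 1 t := by
      rw [← Finset.Ico_add_one_right_eq_Icc]
      congr 1
      omega
    have h2 : Finset.Icc 1 k = Finset.Ico 1 (k+1) := by
      rw [Finset.Ico_add_one_right_eq_Icc]
    rw [h1, h2, ← Finset.sum_Ico_consecutive _ (by omega : 1 ≤ t) (by omega : t ≤ k+1)]
    ring
  have htail_nonneg : ∀ w, 0 ≤ ∑ r ∈ Finset.Ico t (k+1),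
      δ r * |⟪w, v (r - 1)⟫ - ⟪w, v r⟫| := by
    intro w
    apply Finset.sum_nonneg
    intro r hr
    rw [Finset.mem_Ico] at hr
    have : 0 ≤ δ r := by
      rcases hδ r (by omega) (by omega) with h | h <;> rw [h] <;> norm_num
    positivity
  have hfge : ∀ w, ft w ≤ f w := by
    intro w
    rw [hsplit w]
    nlinarith [htail_nonneg w]
  -- if components vanish then f = ft
  have hzero : ∀ w, (∀ r, t ≤ r → r ≤ k → ⟪w, v r⟫ = 0) → f w = ft w := by
    intro w hw
    rw [hsplit w]
    have : ∑ r ∈ Finset.Ico t (k+1), δ r * |⟪w, v (r - 1)⟫ - ⟪w, v r⟫| = 0 := by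
      apply Finset.sum_eq_zero
      intro r hr
      rw [Finset.mem_Ico] at hr
      by_cases h : r = t
      · rw [h, hδt]; ring
      · rw [hw (r-1) (by omega) (by omega), hw r (by omega) (by omega)]
        simp
    rw [this]
    ring
  have hftP : ∀ w, ft (P w) = ft w := by
    intro w
    have h0 : ⟪P w, v 0⟫ = ⟪w, v 0⟫ := by
      rw [hPinner w 0 (by omega), if_pos (by omega : 0 < t)]
    have hterm : ∀ r ∈ Finset.Icc 1 (t-1),
        δ r * |⟪P w, v (r-1)⟫ - ⟪P w, v r⟫| = δ r * |⟪w, v (r-1)⟫ - ⟪w, v r⟫| := by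
      intro r hr
      rw [Finset.mem_Icc] at hr
      rw [hPinner w (r-1) (by omega), hPinner w r (by omega),
        if_pos (by omega : r - 1 < t), if_pos (by omega : r < t)]
    rw [hft, hft, h0, Finset.sum_congr rfl hterm]
  have hfP : ∀ w, f (P w) = ft w := by
    intro w
    rw [hzero (P w) (hPzero w), hftP]
  -- q(Pw) ≤ q(w)
  have hqle : ∀ w, ‖x - P w‖ ^ 2 ≤ ‖x - w‖ ^ 2 := by
    intro w
    rw [hdecomp w]
    nlinarith [sq_nonneg ‖∑ r ∈ S, ⟪w, v r⟫ • v r‖]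
  rw [isMinOn_univ_iff, isMinOn_univ_iff]
  constructor
  · intro h w
    -- first: components of u vanish
    have h1 := h (P u)
    simp only [hftP u] at h1
    have hq : ‖x - u‖ ^ 2 ≤ ‖x - P u‖ ^ 2 := by nlinarith
    have hznorm : ‖∑ r ∈ S, ⟪u, v r⟫ • v r‖ ^ 2 ≤ 0 := by
      have := hdecomp u
      nlinarith
    have hz0 : (∑ r ∈ S, ⟪u, v r⟫ • v r) = 0 := by
      have : ‖∑ r ∈ S, ⟪u, v r⟫ • v r‖ = 0 := by nlinarith [norm_nonneg (∑ r ∈ S, ⟪u, v r⟫ • v r)]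
      exact norm_eq_zero.mp this
    have hu0 : ∀ r, t ≤ r → r ≤ k → ⟪u, v r⟫ = 0 := by
      intro r h1r h2r
      have : ⟪u, v r⟫ - ⟪P u, v r⟫ = 0 := by
        have : ⟪u - P u, v r⟫ = 0 := by
          rw [hP]
          simp only [sub_sub_cancel]
          rw [hz0]
          simp
        rwa [inner_sub_left] at this
      rw [hPzero u r h1r h2r] at this
      linarith
    have hfu : f u = ft u := hzero u hu0
    calc f u + β / 2 * ‖x - u‖ ^ 2 = ft u + β / 2 * ‖x - u‖ ^ 2 := by rw [hfu]
      _ ≤ ft w + β / 2 * ‖x - w‖ ^ 2 := h w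
      _ ≤ f w + β / 2 * ‖x - w‖ ^ 2 := by linarith [hfge w]
  · intro h w
    have h1 := h (P w)
    rw [hfP w] at h1
    have := hqle w
    have := hfge u
    nlinarith
end

section
/- Let 1 ≤ t ≤ k with δ_t = 0, and let x ∈ E satisfy ⟨x, v_r⟩ = 0 for all r with t ≤ r ≤ k. Then f and the truncation f^t are both differentiable at x and their gradients agree: ∇f^t(x) = ∇f(x). -/
open scoped RealInnerProductSpace

lemma key_fd {d : ℕ} (c : ℝ) (u w x : EuclideanSpace ℝ (Fin d)) :
    HasFDerivAt (fun y : EuclideanSpace ℝ (Fin d) => c * (⟪y, u⟫ - ⟪y, w⟫) ^ 2)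
      ((c * (2 * (⟪x, u⟫ - ⟪x, w⟫))) • (innerSL ℝ u - innerSL ℝ w)) x := by
  have hu : HasFDerivAt (fun y : EuclideanSpace ℝ (Fin d) => ⟪y, u⟫ - ⟪y, w⟫)
      (innerSL ℝ u - innerSL ℝ w) x := by
    have := ((innerSL ℝ u) - (innerSL ℝ w)).hasFDerivAt (x := x)
    convert this using 1
    funext y
    simp only [ContinuousLinearMap.sub_apply, innerSL_apply_apply]
    rw [real_inner_comm u y, real_inner_comm w y]
  have h2 := (hu.mul hu).const_mul c
  have hfun : (fun y : EuclideanSpace ℝ (Fin d) => c * (⟪y, u⟫ - ⟪y, w⟫) ^ 2)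
      = fun y => c * ((⟪y, u⟫ - ⟪y, w⟫) * (⟪y, u⟫ - ⟪y, w⟫)) := by
    funext y; ring
  rw [hfun]
  refine h2.congr_fderiv ?_
  ext y
  simp
  ring

/-- For the smooth construction `f` and its truncation `f^t`, if
`δ_t = 0` and `⟨x, v_r⟩ = 0` for all `t ≤ r ≤ k`, then `f` and `f^t` are both
differentiable at `x` with the same gradient. -/
theorem stmt_8 {d : ℕ} (k : ℕ) (hk : 1 ≤ k)
    (v : ℕ → EuclideanSpace ℝ (Fin d))
    (hnorm : ∀ i ≤ k, ‖v i‖ = 1)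
    (horth : ∀ i ≤ k, ∀ j ≤ k, i ≠ j → ⟪v i, v j⟫ = 0)
    (a : ℝ) (δ : ℕ → ℝ)
    (hδ : ∀ r, 1 ≤ r → r ≤ k → δ r = 0 ∨ δ r = 1)
    (t : ℕ) (ht1 : 1 ≤ t) (htk : t ≤ k) (hδt : δ t = 0)
    (f ft : EuclideanSpace ℝ (Fin d) → ℝ)
    (hf : ∀ x, f x = (1 / 8) * (δ 1 * (⟪x, v 0⟫ ^ 2 - 2 * a * ⟪x, v 0⟫) +
      (∑ r ∈ Finset.Icc 1 k, δ r * (⟪x, v (r - 1)⟫ - ⟪x, v r⟫) ^ 2) +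
      δ k * ⟪x, v k⟫ ^ 2))
    (hft : ∀ x, ft x = (1 / 8) * (δ 1 * (⟪x, v 0⟫ ^ 2 - 2 * a * ⟪x, v 0⟫) +
      ∑ r ∈ Finset.Icc 1 (t - 1), δ r * (⟪x, v (r - 1)⟫ - ⟪x, v r⟫) ^ 2))
    (x : EuclideanSpace ℝ (Fin d))
    (hx : ∀ r, t ≤ r → r ≤ k → ⟪x, v r⟫ = 0) :
    ∃ g : EuclideanSpace ℝ (Fin d), HasGradientAt f g x ∧ HasGradientAt ft g x := by
  -- ft has some fderiv at x
  have hft_eq : ft = fun y => (1 / 8) * (δ 1 * (⟪y, v 0⟫ ^ 2 - 2 * a * ⟪y, v 0⟫) +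
      ∑ r ∈ Finset.Icc 1 (t - 1), δ r * (⟪y, v (r - 1)⟫ - ⟪y, v r⟫) ^ 2) := funext hft
  have hdiff : DifferentiableAt ℝ ft x := by
    rw [hft_eq]
    apply DifferentiableAt.const_mul
    apply DifferentiableAt.add
    · have h0 : DifferentiableAt ℝ (fun y : EuclideanSpace ℝ (Fin d) => ⟪y, v 0⟫) x :=
        differentiableAt_id.inner ℝ (differentiableAt_const _)
      exact ((h0.pow 2).sub ((h0.const_mul _))).const_mul _
    · apply DifferentiableAt.fun_sum
      intro r _
      have h1 : DifferentiableAt ℝ (fun y : EuclideanSpace ℝ (Fin d) => ⟪y, v (r-1)⟫) x :=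
        differentiableAt_id.inner ℝ (differentiableAt_const _)
      have h2 : DifferentiableAt ℝ (fun y : EuclideanSpace ℝ (Fin d) => ⟪y, v r⟫) x :=
        differentiableAt_id.inner ℝ (differentiableAt_const _)
      exact ((h1.sub h2).pow 2).const_mul _
  set L := fderiv ℝ ft x with hL
  have hftL : HasFDerivAt ft L x := hdiff.hasFDerivAt
  -- the remainder has zero derivative at x
  have hsum0 : HasFDerivAt (fun y : EuclideanSpace ℝ (Fin d) =>
      ∑ r ∈ Finset.Icc t k, δ r * (⟪y, v (r - 1)⟫ - ⟪y, v r⟫) ^ 2)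
      (0 : EuclideanSpace ℝ (Fin d) →L[ℝ] ℝ) x := by
    have := HasFDerivAt.fun_sum (u := Finset.Icc t k)
      (A := fun r (y : EuclideanSpace ℝ (Fin d)) => δ r * (⟪y, v (r - 1)⟫ - ⟪y, v r⟫) ^ 2)
      (A' := fun r => (0 : EuclideanSpace ℝ (Fin d) →L[ℝ] ℝ)) (x := x) ?_
    · simpa using this
    · intro r hr
      rw [Finset.mem_Icc] at hr
      have key := key_fd (δ r) (v (r - 1)) (v r) x
      have hz : (δ r * (2 * (⟪x, v (r - 1)⟫ - ⟪x, v r⟫))) = 0 := by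
        rcases eq_or_lt_of_le hr.1 with h | h
        · rw [← h, hδt]; ring
        · have h1 : ⟪x, v (r - 1)⟫ = 0 := hx _ (by omega) (by omega)
          have h2 : ⟪x, v r⟫ = 0 := hx _ (by omega) hr.2
          rw [h1, h2]; ring
      rw [hz, zero_smul] at key
      exact key
  have hlast0 : HasFDerivAt (fun y : EuclideanSpace ℝ (Fin d) => δ k * ⟪y, v k⟫ ^ 2)
      (0 : EuclideanSpace ℝ (Fin d) →L[ℝ] ℝ) x := by
    have key := key_fd (δ k) (v k) 0 x
    have hz : (δ k * (2 * (⟪x, v k⟫ - ⟪x, (0 : EuclideanSpace ℝ (Fin d))⟫))) = 0 := by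
      rw [hx k htk le_rfl]; simp
    rw [hz, zero_smul] at key
    simpa using key
  have hrem : HasFDerivAt (fun y : EuclideanSpace ℝ (Fin d) =>
      (1 / 8 : ℝ) * (∑ r ∈ Finset.Icc t k, δ r * (⟪y, v (r - 1)⟫ - ⟪y, v r⟫) ^ 2
        + δ k * ⟪y, v k⟫ ^ 2)) (0 : EuclideanSpace ℝ (Fin d) →L[ℝ] ℝ) x := by
    have := ((hsum0.add hlast0).const_mul (1 / 8 : ℝ))
    simpa using this
  -- f = ft + remainder
  have hfeq : f = fun y => ft y + (1 / 8 : ℝ) *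
      (∑ r ∈ Finset.Icc t k, δ r * (⟪y, v (r - 1)⟫ - ⟪y, v r⟫) ^ 2 + δ k * ⟪y, v k⟫ ^ 2) := by
    funext y
    rw [hf y, hft y]
    have hsplit : (∑ r ∈ Finset.Icc 1 (t - 1), δ r * (⟪y, v (r - 1)⟫ - ⟪y, v r⟫) ^ 2)
        + (∑ r ∈ Finset.Icc t k, δ r * (⟪y, v (r - 1)⟫ - ⟪y, v r⟫) ^ 2)
        = ∑ r ∈ Finset.Icc 1 k, δ r * (⟪y, v (r - 1)⟫ - ⟪y, v r⟫) ^ 2 := by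
      have h1 : Finset.Icc 1 (t - 1) = Finset.Ioc 0 (t - 1) := by
        rw [← Finset.Icc_add_one_left_eq_Ioc, zero_add]
      have h2 : Finset.Icc t k = Finset.Ioc (t - 1) k := by
        rw [← Finset.Icc_add_one_left_eq_Ioc]
        congr 1
        omega
      have h3 : Finset.Icc 1 k = Finset.Ioc 0 k := by
        rw [← Finset.Icc_add_one_left_eq_Ioc, zero_add]
      rw [h1, h2, h3]
      exact Finset.sum_Ioc_consecutive _ (by omega) (by omega)
    rw [← hsplit]
    ring
  have hfL : HasFDerivAt f L x := by
    rw [hfeq]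
    exact (hftL.add hrem).congr_fderiv (add_zero L)
  exact ⟨(InnerProductSpace.toDual ℝ _).symm L, hfL.hasGradientAt, hftL.hasGradientAt⟩
end

section
/- Let 1 ≤ t ≤ k with δ_t = 0, and let x ∈ E satisfy ⟨x, v_r⟩ = 0 for all r with t ≤ r ≤ k. Then for every β > 0 and every u ∈ E, u minimizes w ↦ f^t(w) + (β/2)‖x − w‖² over E if and only if u minimizes w ↦ f(w) + (β/2)‖x − w‖² over E; in particular the prox of f^t at x coincides with the prox of f at x. -/
open scoped RealInnerProductSpace

/-- For the smooth construction `f` and its truncation `f^t`, if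
`δ_t = 0` and `⟨x, v_r⟩ = 0` for all `t ≤ r ≤ k`, then for every `β > 0` a point
`u` minimizes `w ↦ f^t(w) + (β/2)‖x - w‖²` over `E` iff it minimizes
`w ↦ f(w) + (β/2)‖x - w‖²` over `E`; in particular the proxs coincide. -/
theorem stmt_9 {d : ℕ} (k : ℕ) (hk : 1 ≤ k)
    (v : ℕ → EuclideanSpace ℝ (Fin d))
    (hnorm : ∀ i ≤ k, ‖v i‖ = 1)
    (horth : ∀ i ≤ k, ∀ j ≤ k, i ≠ j → ⟪v i, v j⟫ = 0)
    (a : ℝ) (δ : ℕ → ℝ)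
    (hδ : ∀ r, 1 ≤ r → r ≤ k → δ r = 0 ∨ δ r = 1)
    (t : ℕ) (ht1 : 1 ≤ t) (htk : t ≤ k) (hδt : δ t = 0)
    (f ft : EuclideanSpace ℝ (Fin d) → ℝ)
    (hf : ∀ x, f x = (1 / 8) * (δ 1 * (⟪x, v 0⟫ ^ 2 - 2 * a * ⟪x, v 0⟫) +
      (∑ r ∈ Finset.Icc 1 k, δ r * (⟪x, v (r - 1)⟫ - ⟪x, v r⟫) ^ 2) +
      δ k * ⟪x, v k⟫ ^ 2))
    (hft : ∀ x, ft x = (1 / 8) * (δ 1 * (⟪x, v 0⟫ ^ 2 - 2 * a * ⟪x, v 0⟫) +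
      ∑ r ∈ Finset.Icc 1 (t - 1), δ r * (⟪x, v (r - 1)⟫ - ⟪x, v r⟫) ^ 2))
    (x : EuclideanSpace ℝ (Fin d))
    (hx : ∀ r, t ≤ r → r ≤ k → ⟪x, v r⟫ = 0) :
    ∀ β > (0 : ℝ), ∀ u : EuclideanSpace ℝ (Fin d),
      (IsMinOn (fun w => ft w + β / 2 * ‖x - w‖ ^ 2) Set.univ u ↔
       IsMinOn (fun w => f w + β / 2 * ‖x - w‖ ^ 2) Set.univ u) := by
  intro β hβ u
  set S : Finset ℕ := Finset.Icc t k with hS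
  have hvv : ∀ i ≤ k, ∀ j ≤ k, ⟪v i, v j⟫ = if i = j then (1 : ℝ) else 0 := by
    intro i hi j hj
    by_cases h : i = j
    · subst h
      rw [if_pos rfl, real_inner_self_eq_norm_sq, hnorm i hi]; norm_num
    · simp [h, horth i hi j hj h]
  set P : EuclideanSpace ℝ (Fin d) → EuclideanSpace ℝ (Fin d) :=
    fun w => w - ∑ r ∈ S, ⟪w, v r⟫ • v r with hP
  have hPinner : ∀ w, ∀ i ≤ k, ⟪P w, v i⟫ = if t ≤ i then 0 else ⟪w, v i⟫ := by
    intro w i hi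
    have h1 : ⟪P w, v i⟫ = ⟪w, v i⟫ - ∑ r ∈ S, ⟪w, v r⟫ * ⟪v r, v i⟫ := by
      simp only [hP, inner_sub_left, sum_inner, real_inner_smul_left]
    have hsum : ∑ r ∈ S, ⟪w, v r⟫ * ⟪v r, v i⟫ = if i ∈ S then ⟪w, v i⟫ else 0 := by
      have hcong : ∀ r ∈ S, ⟪w, v r⟫ * ⟪v r, v i⟫ = if r = i then ⟪w, v r⟫ else 0 := by
        intro r hr
        rw [hS, Finset.mem_Icc] at hr
        rw [hvv r hr.2 i hi]
        split <;> simp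
      rw [Finset.sum_congr rfl hcong, Finset.sum_ite_eq' S i (fun r => ⟪w, v r⟫)]
    rw [h1, hsum, hS]
    simp only [Finset.mem_Icc]
    by_cases h : t ≤ i
    · simp [h, hi]
    · simp [h]
  have hPzero : ∀ w, ∀ r, t ≤ r → r ≤ k → ⟪P w, v r⟫ = 0 := by
    intro w r h1 h2
    rw [hPinner w r h2, if_pos h1]
  -- norm decomposition
  have hnormsq : ∀ w, ‖x - w‖ ^ 2 = ‖x - P w‖ ^ 2 + ∑ r ∈ S, ⟪w, v r⟫ ^ 2 := by
    intro w
    set s : EuclideanSpace ℝ (Fin d) := ∑ r ∈ S, ⟪w, v r⟫ • v r with hs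
    have hxw : x - w = (x - P w) - s := by
      simp only [hP, hs]; abel
    have hins : ⟪x - P w, s⟫ = 0 := by
      rw [hs, inner_sum]
      apply Finset.sum_eq_zero
      intro r hr
      rw [hS, Finset.mem_Icc] at hr
      rw [real_inner_smul_right, inner_sub_left, hx r hr.1 hr.2, hPzero w r hr.1 hr.2]
      ring
    have hss : ⟪s, s⟫ = ∑ r ∈ S, ⟪w, v r⟫ ^ 2 := by
      rw [hs, sum_inner]
      apply Finset.sum_congr rfl
      intro r hr
      rw [hS, Finset.mem_Icc] at hr
      rw [real_inner_smul_left, inner_sum]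
      have hcong : ∀ r' ∈ S, ⟪v r, ⟪w, v r'⟫ • v r'⟫ = if r' = r then ⟪w, v r'⟫ else 0 := by
        intro r' hr'
        rw [hS, Finset.mem_Icc] at hr'
        rw [real_inner_smul_right, hvv r hr.2 r' hr'.2]
        by_cases h : r' = r
        · subst h; simp
        · rw [if_neg (fun hh => h hh.symm), if_neg h, mul_zero]
      rw [Finset.sum_congr rfl hcong, Finset.sum_ite_eq' S r (fun r' => ⟪w, v r'⟫),
        if_pos (by rw [hS, Finset.mem_Icc]; exact hr)]
      ring
    have := norm_sub_sq_real (x - P w) s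
    rw [← hxw, hins] at this
    rw [this, ← hss, real_inner_self_eq_norm_sq]
    ring
  have hnormle : ∀ w, ‖x - P w‖ ^ 2 ≤ ‖x - w‖ ^ 2 := by
    intro w
    have h := hnormsq w
    have h2 : (0:ℝ) ≤ ∑ r ∈ S, ⟪w, v r⟫ ^ 2 := Finset.sum_nonneg fun i _ => sq_nonneg _
    linarith
  -- ft invariance under P
  have hftP : ∀ w, ft (P w) = ft w := by
    intro w
    rw [hft, hft]
    have h0 : ⟪P w, v 0⟫ = ⟪w, v 0⟫ := by
      rw [hPinner w 0 (by omega), if_neg (by omega)]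
    rw [h0]
    congr 2
    apply Finset.sum_congr rfl
    intro r hr
    rw [Finset.mem_Icc] at hr
    rw [hPinner w (r - 1) (by omega), hPinner w r (by omega),
      if_neg (by omega), if_neg (by omega)]
  -- splitting f
  have hsplit : ∀ w, f w = ft w + (1 / 8) *
      ((∑ r ∈ S, δ r * (⟪w, v (r - 1)⟫ - ⟪w, v r⟫) ^ 2) + δ k * ⟪w, v k⟫ ^ 2) := by
    intro w
    rw [hf, hft]
    have e1 : Finset.Icc 1 k = Finset.Ioc 0 k := by rw [← Finset.Icc_add_one_left_eq_Ioc]; rfl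
    have e2 : Finset.Icc 1 (t - 1) = Finset.Ioc 0 (t - 1) := by rw [← Finset.Icc_add_one_left_eq_Ioc]; rfl
    have e3 : S = Finset.Ioc (t - 1) k := by
      rw [hS, ← Finset.Icc_add_one_left_eq_Ioc]
      congr 1
      omega
    have hsum := Finset.sum_Ioc_consecutive
      (f := fun r => δ r * (⟪w, v (r - 1)⟫ - ⟪w, v r⟫) ^ 2)
      (Nat.zero_le (t - 1)) (show t - 1 ≤ k by omega)
    rw [e1, e2, e3, ← hsum]
    ring
  have hδnn : ∀ r, 1 ≤ r → r ≤ k → 0 ≤ δ r := by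
    intro r h1 h2
    rcases hδ r h1 h2 with h | h <;> rw [h] <;> norm_num
  have hextra_nonneg : ∀ w, ft w ≤ f w := by
    intro w
    have h1 : (0:ℝ) ≤ ∑ r ∈ S, δ r * (⟪w, v (r - 1)⟫ - ⟪w, v r⟫) ^ 2 := by
      apply Finset.sum_nonneg
      intro r hr
      rw [hS, Finset.mem_Icc] at hr
      exact mul_nonneg (hδnn r (by omega) hr.2) (sq_nonneg _)
    have h2 : (0:ℝ) ≤ δ k * ⟪w, v k⟫ ^ 2 := mul_nonneg (hδnn k hk le_rfl) (sq_nonneg _)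
    have := hsplit w
    linarith
  have hvanish : ∀ w, (∀ r, t ≤ r → r ≤ k → ⟪w, v r⟫ = 0) → f w = ft w := by
    intro w hw
    rw [hsplit w]
    have h1 : ∑ r ∈ S, δ r * (⟪w, v (r - 1)⟫ - ⟪w, v r⟫) ^ 2 = 0 := by
      apply Finset.sum_eq_zero
      intro r hr
      rw [hS, Finset.mem_Icc] at hr
      rcases eq_or_lt_of_le hr.1 with h | h
      · rw [← h, hδt]; ring
      · rw [hw (r - 1) (by omega) (by omega), hw r hr.1 hr.2]; ring
    rw [h1, hw k htk le_rfl]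
    ring
  have hfPw : ∀ w, f (P w) = ft w := by
    intro w
    rw [hvanish (P w) (hPzero w), hftP w]
  -- if ‖x-u‖² ≤ ‖x-Pu‖² then all components of u vanish
  have hcomp : ‖x - u‖ ^ 2 ≤ ‖x - P u‖ ^ 2 → ∀ r, t ≤ r → r ≤ k → ⟪u, v r⟫ = 0 := by
    intro h r hr1 hr2
    have hsum0 : ∑ r ∈ S, ⟪u, v r⟫ ^ 2 ≤ 0 := by
      have := hnormsq u; linarith
    have heach := (Finset.sum_eq_zero_iff_of_nonneg (fun i _ => sq_nonneg _)).mp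
      (le_antisymm hsum0 (Finset.sum_nonneg fun i _ => sq_nonneg _))
    have h0 := heach r (by rw [hS, Finset.mem_Icc]; exact ⟨hr1, hr2⟩)
    exact (pow_eq_zero_iff (by norm_num : (2:ℕ) ≠ 0)).mp h0
  rw [isMinOn_univ_iff, isMinOn_univ_iff]
  constructor
  · intro hmin w
    have hPu := hmin (P u)
    rw [hftP u] at hPu
    have hle : ‖x - u‖ ^ 2 ≤ ‖x - P u‖ ^ 2 := by nlinarith
    have hzero := hcomp hle
    have hfu : f u = ft u := hvanish u hzero
    have h1 := hmin (P w)
    rw [hftP w] at h1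
    have h2 : β / 2 * ‖x - P w‖ ^ 2 ≤ β / 2 * ‖x - w‖ ^ 2 :=
      mul_le_mul_of_nonneg_left (hnormle w) (by linarith)
    have h3 := hextra_nonneg w
    linarith
  · intro hmin w
    have hPu := hmin (P u)
    rw [hfPw u] at hPu
    have hftle := hextra_nonneg u
    have hle : ‖x - u‖ ^ 2 ≤ ‖x - P u‖ ^ 2 := by nlinarith
    have hzero := hcomp hle
    have hfu : f u = ft u := hvanish u hzero
    have h1 := hmin (P w)
    rw [hfPw w] at h1
    have h2 : β / 2 * ‖x - P w‖ ^ 2 ≤ β / 2 * ‖x - w‖ ^ 2 :=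
      mul_le_mul_of_nonneg_left (hnormle w) (by linarith)
    linarith
end

section
/- Let f be the function f(x) = (1/8)·( δ_1·(⟨x,v₀⟩² − 2a⟨x,v₀⟩) + Σ_{r=1}^k δ_r·(⟨x,v_{r−1}⟩ − ⟨x,v_r⟩)² + δ_k·⟨x,v_k⟩² ) with orthonormal v_0, …, v_k, a ∈ ℝ, and indicators δ_r ∈ {0,1}. Then f is convex, differentiable on E, and its gradient is Lipschitz continuous with constant 1 (i.e., f is 1-smooth). -/
set_option maxHeartbeats 2000000


open scoped RealInnerProductSpace

/-- The smooth construction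
`f(x) = (1/8)(δ₁(⟨x,v₀⟩² - 2a⟨x,v₀⟩) + Σ_{r=1}^k δ_r(⟨x,v_{r-1}⟩ - ⟨x,v_r⟩)² + δ_k⟨x,v_k⟩²)`
is convex, differentiable everywhere, and its gradient is `1`-Lipschitz
(i.e. `f` is `1`-smooth). -/
theorem stmt_10 {d : ℕ} (k : ℕ) (hk : 1 ≤ k)
    (v : ℕ → EuclideanSpace ℝ (Fin d))
    (hnorm : ∀ i ≤ k, ‖v i‖ = 1)
    (horth : ∀ i ≤ k, ∀ j ≤ k, i ≠ j → ⟪v i, v j⟫ = 0)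
    (a : ℝ) (δ : ℕ → ℝ)
    (hδ : ∀ r, 1 ≤ r → r ≤ k → δ r = 0 ∨ δ r = 1)
    (f : EuclideanSpace ℝ (Fin d) → ℝ)
    (hf : ∀ x, f x = (1 / 8) * (δ 1 * (⟪x, v 0⟫ ^ 2 - 2 * a * ⟪x, v 0⟫) +
      (∑ r ∈ Finset.Icc 1 k, δ r * (⟪x, v (r - 1)⟫ - ⟪x, v r⟫) ^ 2) +
      δ k * ⟪x, v k⟫ ^ 2)) :
    ConvexOn ℝ Set.univ f ∧
    ∃ g : EuclideanSpace ℝ (Fin d) → EuclideanSpace ℝ (Fin d),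
      (∀ x, HasGradientAt f (g x) x) ∧ LipschitzWith 1 g := by
  classical
  have hδ0 : ∀ r, 1 ≤ r → r ≤ k → 0 ≤ δ r := fun r h1 h2 => by
    rcases hδ r h1 h2 with h | h <;> simp [h]
  have hδ1 : ∀ r, 1 ≤ r → r ≤ k → δ r ≤ 1 := fun r h1 h2 => by
    rcases hδ r h1 h2 with h | h <;> simp [h]
  have hfe : f = fun x => (1 / 8) * (δ 1 * (⟪x, v 0⟫ ^ 2 - 2 * a * ⟪x, v 0⟫) +
      (∑ r ∈ Finset.Icc 1 k, δ r * (⟪x, v (r - 1)⟫ - ⟪x, v r⟫) ^ 2) +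
      δ k * ⟪x, v k⟫ ^ 2) := funext hf
  subst hfe
  constructor
  · -- Convexity
    refine ⟨convex_univ, ?_⟩
    intro x _ y _ p q hp hq hpq
    simp only [smul_eq_mul]
    have hcomb : ∀ w : EuclideanSpace ℝ (Fin d),
        ⟪p • x + q • y, w⟫ = p * ⟪x, w⟫ + q * ⟪y, w⟫ := by
      intro w; rw [inner_add_left, real_inner_smul_left, real_inner_smul_left]
    simp only [hcomb]
    have hq' : q = 1 - p := by linarith
    subst hq'
    have hsum : (∑ r ∈ Finset.Icc 1 k,
          δ r * ((p * ⟪x, v (r-1)⟫ + (1-p) * ⟪y, v (r-1)⟫) - (p * ⟪x, v r⟫ + (1-p) * ⟪y, v r⟫)) ^ 2)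
        ≤ p * (∑ r ∈ Finset.Icc 1 k, δ r * (⟪x, v (r-1)⟫ - ⟪x, v r⟫) ^ 2)
          + (1-p) * (∑ r ∈ Finset.Icc 1 k, δ r * (⟪y, v (r-1)⟫ - ⟪y, v r⟫) ^ 2) := by
      rw [Finset.mul_sum, Finset.mul_sum, ← Finset.sum_add_distrib]
      refine Finset.sum_le_sum fun r hr => ?_
      obtain ⟨hr1, hr2⟩ := Finset.mem_Icc.mp hr
      have h0 := hδ0 r hr1 hr2
      nlinarith [mul_nonneg (mul_nonneg h0 (mul_nonneg hp hq))
        (sq_nonneg ((⟪x, v (r-1)⟫ - ⟪x, v r⟫) - (⟪y, v (r-1)⟫ - ⟪y, v r⟫)))]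
    have h1 : δ 1 * ((p * ⟪x, v 0⟫ + (1-p) * ⟪y, v 0⟫) ^ 2
          - 2 * a * (p * ⟪x, v 0⟫ + (1-p) * ⟪y, v 0⟫))
        ≤ p * (δ 1 * (⟪x, v 0⟫ ^ 2 - 2 * a * ⟪x, v 0⟫))
          + (1-p) * (δ 1 * (⟪y, v 0⟫ ^ 2 - 2 * a * ⟪y, v 0⟫)) := by
      have h0 := hδ0 1 le_rfl hk
      nlinarith [mul_nonneg (mul_nonneg h0 (mul_nonneg hp hq)) (sq_nonneg (⟪x, v 0⟫ - ⟪y, v 0⟫))]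
    have h2 : δ k * (p * ⟪x, v k⟫ + (1-p) * ⟪y, v k⟫) ^ 2
        ≤ p * (δ k * ⟪x, v k⟫ ^ 2) + (1-p) * (δ k * ⟪y, v k⟫ ^ 2) := by
      have h0 := hδ0 k hk le_rfl
      nlinarith [mul_nonneg (mul_nonneg h0 (mul_nonneg hp hq)) (sq_nonneg (⟪x, v k⟫ - ⟪y, v k⟫))]
    linarith
  · -- Gradient and Lipschitz
    set T : EuclideanSpace ℝ (Fin d) →L[ℝ] EuclideanSpace ℝ (Fin d) :=
      (4:ℝ)⁻¹ • (δ 1 • ((innerSL ℝ (v 0)).smulRight (v 0)) +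
        (∑ r ∈ Finset.Icc 1 k,
          δ r • ((innerSL ℝ (v (r-1) - v r)).smulRight (v (r-1) - v r))) +
        δ k • ((innerSL ℝ (v k)).smulRight (v k))) with hT
    have hTinner : ∀ z w : EuclideanSpace ℝ (Fin d), ⟪T z, w⟫ = (4:ℝ)⁻¹ *
        (δ 1 * (⟪v 0, z⟫ * ⟪v 0, w⟫) +
        (∑ r ∈ Finset.Icc 1 k, δ r * (⟪v (r-1) - v r, z⟫ * ⟪v (r-1) - v r, w⟫)) +
        δ k * (⟪v k, z⟫ * ⟪v k, w⟫)) := by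
      intro z w
      rw [hT]
      simp only [ContinuousLinearMap.smul_apply, ContinuousLinearMap.add_apply,
        ContinuousLinearMap.sum_apply, ContinuousLinearMap.coe_smul', Pi.smul_apply,
        ContinuousLinearMap.smulRight_apply, innerSL_apply_apply, smul_smul]
      rw [real_inner_smul_left, inner_add_left, inner_add_left, sum_inner,
        real_inner_smul_left, real_inner_smul_left]
      rw [Finset.sum_congr rfl (fun r _ => real_inner_smul_left (v (r-1) - v r) w
        (δ r * ⟪v (r-1) - v r, z⟫))]
      rw [Finset.sum_congr rfl (fun r _ => by ring :
        ∀ r ∈ Finset.Icc 1 k, δ r * ⟪v (r-1) - v r, z⟫ * ⟪v (r-1) - v r, w⟫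
          = δ r * (⟪v (r-1) - v r, z⟫ * ⟪v (r-1) - v r, w⟫))]
      ring
    have hsym : ∀ z w : EuclideanSpace ℝ (Fin d), ⟪T z, w⟫ = ⟪T w, z⟫ := by
      intro z w
      rw [hTinner, hTinner]
      rw [Finset.sum_congr rfl (fun r _ => by ring :
        ∀ r ∈ Finset.Icc 1 k, δ r * (⟪v (r-1) - v r, z⟫ * ⟪v (r-1) - v r, w⟫)
          = δ r * (⟪v (r-1) - v r, w⟫ * ⟪v (r-1) - v r, z⟫))]
      ring
    have hpos : ∀ z : EuclideanSpace ℝ (Fin d), 0 ≤ ⟪T z, z⟫ := by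
      intro z
      rw [hTinner]
      have h1 : 0 ≤ δ 1 * (⟪v 0, z⟫ * ⟪v 0, z⟫) :=
        mul_nonneg (hδ0 1 le_rfl hk) (mul_self_nonneg _)
      have h2 : 0 ≤ ∑ r ∈ Finset.Icc 1 k,
          δ r * (⟪v (r-1) - v r, z⟫ * ⟪v (r-1) - v r, z⟫) := by
        refine Finset.sum_nonneg fun r hr => ?_
        obtain ⟨hr1, hr2⟩ := Finset.mem_Icc.mp hr
        exact mul_nonneg (hδ0 r hr1 hr2) (mul_self_nonneg _)
      have h3 : 0 ≤ δ k * (⟪v k, z⟫ * ⟪v k, z⟫) :=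
        mul_nonneg (hδ0 k hk le_rfl) (mul_self_nonneg _)
      exact mul_nonneg (by norm_num) (by linarith)
    have hle : ∀ z : EuclideanSpace ℝ (Fin d), ⟪T z, z⟫ ≤ ‖z‖ ^ 2 := by
      intro z
      set c : ℕ → ℝ := fun i => ⟪v i, z⟫ with hc
      -- Bessel
      have hON : Orthonormal ℝ (fun i : Fin (k+1) => v i) := by
        rw [orthonormal_iff_ite]
        intro i j
        by_cases hij : i = j
        · subst hij
          rw [if_pos rfl, real_inner_self_eq_norm_sq, hnorm i.1 (Nat.lt_succ_iff.mp i.2)]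
          norm_num
        · rw [if_neg hij]
          exact horth i.1 (Nat.lt_succ_iff.mp i.2) j.1 (Nat.lt_succ_iff.mp j.2)
            (fun h => hij (Fin.ext h))
      have hBessel : (∑ i ∈ Finset.range (k+1), c i ^ 2) ≤ ‖z‖ ^ 2 := by
        have h := hON.sum_inner_products_le z (s := Finset.univ)
        rw [← Fin.sum_univ_eq_sum_range]
        simpa [Real.norm_eq_abs, sq_abs] using h
      set S := ∑ i ∈ Finset.range (k+1), c i ^ 2 with hS
      have hS0 : S = (∑ i ∈ Finset.range k, c i ^ 2) + c k ^ 2 := Finset.sum_range_succ _ k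
      have hS1 : S = (∑ i ∈ Finset.range k, c (i+1) ^ 2) + c 0 ^ 2 := Finset.sum_range_succ' _ k
      rw [hTinner]
      have hsum_eq : (∑ r ∈ Finset.Icc 1 k,
            δ r * (⟪v (r-1) - v r, z⟫ * ⟪v (r-1) - v r, z⟫))
          = ∑ i ∈ Finset.range k, δ (i+1) * ((c i - c (i+1)) * (c i - c (i+1))) := by
        rw [← Finset.Ico_add_one_right_eq_Icc, Finset.sum_Ico_eq_sum_range]
        refine Finset.sum_congr (by norm_num) fun i _ => ?_
        have h2 : 1 + i = i + 1 := by omega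
        rw [h2]
        have h1 : i + 1 - 1 = i := by omega
        rw [h1, inner_sub_left]
      rw [hsum_eq]
      have hsum_le : (∑ i ∈ Finset.range k, δ (i+1) * ((c i - c (i+1)) * (c i - c (i+1))))
          ≤ ∑ i ∈ Finset.range k, (2 * c i ^ 2 + 2 * c (i+1) ^ 2) := by
        refine Finset.sum_le_sum fun i hi => ?_
        have hi' := Finset.mem_range.mp hi
        have hδi0 := hδ0 (i+1) (Nat.le_add_left 1 i) (by omega)
        have hδi1 := hδ1 (i+1) (Nat.le_add_left 1 i) (by omega)
        nlinarith [sq_nonneg (c i - c (i+1)), sq_nonneg (c i + c (i+1)),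
          mul_self_nonneg (c i - c (i+1))]
      have e1 : (∑ i ∈ Finset.range k, (2 * c i ^ 2 + 2 * c (i+1) ^ 2))
          = 2 * (S - c k ^ 2) + 2 * (S - c 0 ^ 2) := by
        rw [Finset.sum_add_distrib, ← Finset.mul_sum, ← Finset.mul_sum]
        have e2 : (∑ i ∈ Finset.range k, c i ^ 2) = S - c k ^ 2 := by rw [hS0]; ring
        have e3 : (∑ i ∈ Finset.range k, c (i+1) ^ 2) = S - c 0 ^ 2 := by rw [hS1]; ring
        rw [e2, e3]
      have hc0 : δ 1 * (c 0 * c 0) ≤ c 0 ^ 2 := by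
        have h := hδ1 1 le_rfl hk
        have h' := hδ0 1 le_rfl hk
        nlinarith [mul_self_nonneg (c 0)]
      have hck : δ k * (c k * c k) ≤ c k ^ 2 := by
        have h := hδ1 k hk le_rfl
        have h' := hδ0 k hk le_rfl
        nlinarith [mul_self_nonneg (c k)]
      have h8 : (∑ i ∈ Finset.range k, δ (i+1) * ((c i - c (i+1)) * (c i - c (i+1))))
          ≤ 2 * (S - c k ^ 2) + 2 * (S - c 0 ^ 2) := by rw [← e1]; exact hsum_le
      have hc02 : 0 ≤ c 0 ^ 2 := sq_nonneg _
      have hck2 : 0 ≤ c k ^ 2 := sq_nonneg _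
      linarith
    -- Cauchy-Schwarz for the positive bilinear form
    have hCS : ∀ z w : EuclideanSpace ℝ (Fin d), ⟪T z, w⟫ ^ 2 ≤ ⟪T z, z⟫ * ⟪T w, w⟫ := by
      intro z w
      have key : ∀ t : ℝ, 0 ≤ ⟪T w, w⟫ * (t * t) + (2 * ⟪T z, w⟫) * t + ⟪T z, z⟫ := by
        intro t
        have h := hpos (z + t • w)
        have hsym' := hsym w z
        have expand : ⟪T (z + t • w), z + t • w⟫
            = ⟪T z, z⟫ + t * ⟪T z, w⟫ + t * ⟪T w, z⟫ + (t * t) * ⟪T w, w⟫ := by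
          rw [map_add, map_smul, inner_add_left, inner_add_right, inner_add_right,
            real_inner_smul_left, real_inner_smul_right, real_inner_smul_left,
            real_inner_smul_right]
          ring
        rw [expand, hsym'] at h
        nlinarith [h]
      have hd := discrim_le_zero key
      rw [discrim] at hd
      nlinarith [hd]
    have hTle : ∀ z : EuclideanSpace ℝ (Fin d), ‖T z‖ ≤ ‖z‖ := by
      intro z
      have h1 : ⟪T z, T z⟫ = ‖T z‖ ^ 2 := real_inner_self_eq_norm_sq (T z)
      have h2 := hCS z (T z)
      have h3 := hle z
      have h4 := hle (T z)
      have h5 := hpos z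
      have h6 := hpos (T z)
      rw [h1] at h2
      have h7 : ‖T z‖ ^ 2 * ‖T z‖ ^ 2 ≤ ‖z‖ ^ 2 * ‖T z‖ ^ 2 := by
        calc ‖T z‖ ^ 2 * ‖T z‖ ^ 2 = (‖T z‖ ^ 2) ^ 2 := by ring
          _ ≤ ⟪T z, z⟫ * ⟪T (T z), T z⟫ := h2
          _ ≤ ‖z‖ ^ 2 * ‖T z‖ ^ 2 := mul_le_mul h3 h4 h6 (sq_nonneg _)
      rcases eq_or_lt_of_le (norm_nonneg (T z)) with h8 | h8
      · rw [← h8]; exact norm_nonneg z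
      · have h9 : ‖T z‖ ^ 2 ≤ ‖z‖ ^ 2 :=
          le_of_mul_le_mul_right h7 (by positivity)
        exact le_of_pow_le_pow_left₀ two_ne_zero (norm_nonneg z) h9
    set b : EuclideanSpace ℝ (Fin d) := (-(δ 1 * a / 4)) • v 0 with hb
    refine ⟨fun x => T x + b, ?_, ?_⟩
    · intro x
      rw [hasGradientAt_iff_hasFDerivAt]
      have hfmul : (fun x : EuclideanSpace ℝ (Fin d) =>
          (1 / 8 : ℝ) * (δ 1 * (⟪x, v 0⟫ ^ 2 - 2 * a * ⟪x, v 0⟫) +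
          (∑ r ∈ Finset.Icc 1 k, δ r * (⟪x, v (r - 1)⟫ - ⟪x, v r⟫) ^ 2) +
          δ k * ⟪x, v k⟫ ^ 2))
          = (fun x : EuclideanSpace ℝ (Fin d) =>
          (1 / 8 : ℝ) * (δ 1 * (⟪x, v 0⟫ * ⟪x, v 0⟫ - 2 * a * ⟪x, v 0⟫) +
          (∑ r ∈ Finset.Icc 1 k, δ r * ((⟪x, v (r - 1)⟫ - ⟪x, v r⟫) *
            (⟪x, v (r - 1)⟫ - ⟪x, v r⟫))) +
          δ k * (⟪x, v k⟫ * ⟪x, v k⟫))) := by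
        funext y
        simp only [pow_two]
      rw [hfmul]
      have h0 : ∀ w : EuclideanSpace ℝ (Fin d),
          HasFDerivAt (fun y : EuclideanSpace ℝ (Fin d) => ⟪y, w⟫) (innerSL ℝ w) x := by
        intro w
        have h := (innerSL ℝ w).hasFDerivAt (x := x)
        have he : (fun y : EuclideanSpace ℝ (Fin d) => ⟪y, w⟫)
            = fun y : EuclideanSpace ℝ (Fin d) => (innerSL ℝ w) y :=
          funext fun y => by rw [real_inner_comm]; exact (innerSL_apply_apply (𝕜 := ℝ) w y).symm
        rw [he]
        exact h
      have hd1 := ((((h0 (v 0)).mul (h0 (v 0))).sub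
        ((h0 (v 0)).const_mul (2 * a))).const_mul (δ 1))
      have hd2 : HasFDerivAt
          (fun y : EuclideanSpace ℝ (Fin d) =>
            ∑ r ∈ Finset.Icc 1 k, δ r * ((⟪y, v (r-1)⟫ - ⟪y, v r⟫) * (⟪y, v (r-1)⟫ - ⟪y, v r⟫)))
          (∑ r ∈ Finset.Icc 1 k, δ r •
            ((⟪x, v (r-1)⟫ - ⟪x, v r⟫) • (innerSL ℝ (v (r-1)) - innerSL ℝ (v r))
            + (⟪x, v (r-1)⟫ - ⟪x, v r⟫) • (innerSL ℝ (v (r-1)) - innerSL ℝ (v r)))) x := by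
        refine HasFDerivAt.fun_sum fun r _ => ?_
        exact (((h0 (v (r-1))).sub (h0 (v r))).mul ((h0 (v (r-1))).sub (h0 (v r)))).const_mul (δ r)
      have hd3 := (((h0 (v k)).mul (h0 (v k))).const_mul (δ k))
      have htot := ((hd1.add hd2).add hd3).const_mul (1/8 : ℝ)
      refine htot.congr_fderiv ?_
      apply ContinuousLinearMap.ext
      intro w
      rw [InnerProductSpace.toDual_apply_apply, inner_add_left, hTinner]
      have hbw : ⟪b, w⟫ = -(δ 1 * a / 4) * ⟪v 0, w⟫ := real_inner_smul_left _ _ _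
      rw [hbw]
      simp only [ContinuousLinearMap.smul_apply, ContinuousLinearMap.add_apply,
        ContinuousLinearMap.sub_apply, ContinuousLinearMap.sum_apply, innerSL_apply_apply,
        smul_eq_mul]
      have hsL : (∑ r ∈ Finset.Icc 1 k, δ r *
            ((⟪x, v (r-1)⟫ - ⟪x, v r⟫) * (⟪v (r-1), w⟫ - ⟪v r, w⟫)
            + (⟪x, v (r-1)⟫ - ⟪x, v r⟫) * (⟪v (r-1), w⟫ - ⟪v r, w⟫)))
          = 2 * ∑ r ∈ Finset.Icc 1 k, δ r *
            ((⟪x, v (r-1)⟫ - ⟪x, v r⟫) * (⟪v (r-1), w⟫ - ⟪v r, w⟫)) := by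
        rw [Finset.mul_sum]
        exact Finset.sum_congr rfl fun r _ => by ring
      have hsR : (∑ r ∈ Finset.Icc 1 k, δ r * (⟪v (r-1) - v r, x⟫ * ⟪v (r-1) - v r, w⟫))
          = ∑ r ∈ Finset.Icc 1 k, δ r *
            ((⟪x, v (r-1)⟫ - ⟪x, v r⟫) * (⟪v (r-1), w⟫ - ⟪v r, w⟫)) :=
        Finset.sum_congr rfl fun r _ => by
          rw [inner_sub_left, inner_sub_left, real_inner_comm (v (r-1)) x,
            real_inner_comm (v r) x]
      rw [hsL, hsR, real_inner_comm (v 0) x, real_inner_comm (v k) x]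
      ring
    · refine LipschitzWith.of_dist_le_mul fun x y => ?_
      rw [dist_eq_norm, dist_eq_norm]
      have he : (T x + b) - (T y + b) = T (x - y) := by
        rw [map_sub]; abel
      rw [he]
      simpa using hTle (x - y)
end

section
/- Let t ≥ 1 be an integer, let v_0, …, v_{t−1} be orthonormal vectors in E, and let a > 0 and κ > 0. Define G(x) = κ·( ⟨x,v₀⟩² − 2a⟨x,v₀⟩ + Σ_{r=1}^{t−1} (⟨x,v_{r−1}⟩ − ⟨x,v_r⟩)² + ⟨x,v_{t−1}⟩² ). Then the point x* := a·Σ_{r=0}^{t−1} (1 − (r+1)/(t+1))·v_r minimizes G over E, the minimum value is G(x*) = −κ·a²·(1 − 1/(t+1)), and ‖x*‖² ≤ a²·t/3. -/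
open scoped RealInnerProductSpace

lemma sumsq' (n : ℕ) : ∑ r ∈ Finset.range n, ((n:ℝ) - r)^2 = n*(n+1)*(2*n+1)/6 := by
  induction n with
  | zero => simp
  | succ m ih =>
    rw [Finset.sum_range_succ']
    have h1 : ∑ i ∈ Finset.range m, (((m+1:ℕ):ℝ) - ((i+1:ℕ):ℝ))^2
        = ∑ i ∈ Finset.range m, ((m:ℝ) - i)^2 := by
      apply Finset.sum_congr rfl; intro i _; push_cast; ring
    push_cast
    push_cast at h1
    rw [h1, ih]
    ring

lemma alg (τ : ℕ) (s : ℝ) (c e : ℕ → ℝ)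
    (hd : ∀ i ≤ τ, e i = c i - s*((τ:ℝ)+1-(i:ℝ))) :
    c 0 ^ 2 - 2*(s*((τ:ℝ)+2))*c 0 + (∑ i ∈ Finset.range τ, (c i - c (i+1))^2) + c τ ^ 2
    = -(s^2*((τ:ℝ)+1)*((τ:ℝ)+2))
      + (e 0 ^ 2 + (∑ i ∈ Finset.range τ, (e i - e (i+1))^2) + e τ ^ 2) := by
  have h1 : ∀ i ∈ Finset.range τ, (c i - c (i+1))^2
      = (e i - e (i+1))^2 + s^2 + 2*s*(e i - e (i+1)) := by
    intro i hi
    rw [Finset.mem_range] at hi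
    rw [hd i (by omega), hd (i+1) (by omega)]
    push_cast; ring
  rw [Finset.sum_congr rfl h1, Finset.sum_add_distrib, Finset.sum_add_distrib,
    Finset.sum_const, ← Finset.mul_sum, Finset.sum_range_sub' e, Finset.card_range,
    nsmul_eq_mul]
  have hc0 : c 0 = e 0 + s*((τ:ℝ)+1) := by
    have := hd 0 (by omega); push_cast at this; linarith
  have hcτ : c τ = e τ + s := by
    have := hd τ le_rfl; push_cast at this; linarith
  rw [hc0, hcτ]
  ring

/-- For `G(x) = κ(⟨x,v₀⟩² - 2a⟨x,v₀⟩ + Σ_{r=1}^{t-1}(⟨x,v_{r-1}⟩ - ⟨x,v_r⟩)²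
+ ⟨x,v_{t-1}⟩²)` with orthonormal `v₀, …, v_{t-1}`, the point
`x* = a Σ_{r=0}^{t-1} (1 - (r+1)/(t+1)) v_r` is a global minimizer, the minimum value is
`G(x*) = -κ a² (1 - 1/(t+1))`, and `‖x*‖² ≤ a² t / 3`. -/
theorem stmt_11 {d : ℕ} (t : ℕ) (ht : 1 ≤ t)
    (v : ℕ → EuclideanSpace ℝ (Fin d))
    (hnorm : ∀ i < t, ‖v i‖ = 1)
    (horth : ∀ i < t, ∀ j < t, i ≠ j → ⟪v i, v j⟫ = 0)
    (a κ : ℝ) (ha : 0 < a) (hκ : 0 < κ)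
    (G : EuclideanSpace ℝ (Fin d) → ℝ)
    (hG : ∀ x, G x = κ * (⟪x, v 0⟫ ^ 2 - 2 * a * ⟪x, v 0⟫ +
      (∑ r ∈ Finset.Icc 1 (t - 1), (⟪x, v (r - 1)⟫ - ⟪x, v r⟫) ^ 2) +
      ⟪x, v (t - 1)⟫ ^ 2))
    (xstar : EuclideanSpace ℝ (Fin d))
    (hxstar : xstar = ∑ r ∈ Finset.range t,
      (a * (1 - ((r : ℝ) + 1) / ((t : ℝ) + 1))) • v r) :
    IsMinOn G Set.univ xstar ∧
    G xstar = -κ * a ^ 2 * (1 - 1 / ((t : ℝ) + 1)) ∧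
    ‖xstar‖ ^ 2 ≤ a ^ 2 * t / 3 := by
  obtain ⟨τ, rfl⟩ : ∃ τ, t = τ + 1 := ⟨t - 1, by omega⟩
  have hτ2 : (0:ℝ) < (τ:ℝ) + 2 := by positivity
  have hne : ((τ:ℝ)+2) ≠ 0 := hτ2.ne'
  have hD : ((τ+1:ℕ):ℝ)+1 = (τ:ℝ)+2 := by push_cast; ring
  set s : ℝ := a / ((τ:ℝ) + 2) with hsdef
  have hsa : a = s * ((τ:ℝ)+2) := by rw [hsdef, div_mul_cancel₀ _ hne]
  -- coefficients equal cs
  have hcoef : ∀ r : ℕ, r ≤ τ →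
      a * (1 - ((r : ℝ) + 1) / (((τ+1:ℕ) : ℝ) + 1)) = s * ((τ:ℝ)+1-(r:ℝ)) := by
    intro r hr
    rw [hD, hsdef]
    rw [div_mul_eq_mul_div, mul_div_assoc, mul_eq_mul_left_iff]
    left
    rw [eq_div_iff hne, sub_mul, div_mul_cancel₀ _ hne]
    ring
  -- inner products of xstar with v i
  have hip : ∀ i ≤ τ, ⟪xstar, v i⟫ = s * ((τ:ℝ)+1-(i:ℝ)) := by
    intro i hi
    rw [hxstar, sum_inner]
    rw [Finset.sum_eq_single i]
    · rw [real_inner_smul_left]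
      have : ⟪v i, v i⟫ = 1 := by
        have h := real_inner_self_eq_norm_sq (v i)
        rw [hnorm i (by omega)] at h
        simpa using h
      rw [this, mul_one, hcoef i hi]
    · intro b hb hbi
      rw [real_inner_smul_left, horth b (Finset.mem_range.mp hb) i (by omega) hbi, mul_zero]
    · intro h
      exact absurd (Finset.mem_range.mpr (by omega)) h
  -- G in terms of deviations
  have hGx : ∀ x : EuclideanSpace ℝ (Fin d),
      G x = κ * (-(s^2*((τ:ℝ)+1)*((τ:ℝ)+2))
        + ((⟪x, v 0⟫ - ⟪xstar, v 0⟫) ^ 2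
          + (∑ i ∈ Finset.range τ,
              ((⟪x, v i⟫ - ⟪xstar, v i⟫) - (⟪x, v (i+1)⟫ - ⟪xstar, v (i+1)⟫))^2)
          + (⟪x, v τ⟫ - ⟪xstar, v τ⟫) ^ 2)) := by
    intro x
    rw [hG]
    have hidx : τ + 1 - 1 = τ := rfl
    rw [hidx]
    have hsum : ∑ r ∈ Finset.Icc 1 τ, (⟪x, v (r-1)⟫ - ⟪x, v r⟫)^2
        = ∑ i ∈ Finset.range τ, (⟪x, v i⟫ - ⟪x, v (i+1)⟫)^2 := by
      rw [← Finset.Ico_add_one_right_eq_Icc, Finset.sum_Ico_eq_sum_range]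
      apply Finset.sum_congr rfl
      intro i _
      have e1 : 1 + i - 1 = i := by omega
      have e2 : 1 + i = i + 1 := by omega
      rw [e1, e2]
    rw [hsum]
    have key := alg τ s (fun i => ⟪x, v i⟫) (fun i => ⟪x, v i⟫ - ⟪xstar, v i⟫)
      (by intro i hi; simp only [hip i hi])
    rw [hsa]
    rw [key]
  refine ⟨?_, ?_, ?_⟩
  · intro x _
    simp only [Set.mem_setOf_eq]
    rw [hGx x, hGx xstar]
    simp only [sub_self]
    have hS : (0:ℝ) ≤ (⟪x, v 0⟫ - ⟪xstar, v 0⟫) ^ 2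
          + (∑ i ∈ Finset.range τ,
              ((⟪x, v i⟫ - ⟪xstar, v i⟫) - (⟪x, v (i+1)⟫ - ⟪xstar, v (i+1)⟫))^2)
          + (⟪x, v τ⟫ - ⟪xstar, v τ⟫) ^ 2 := by
      have : (0:ℝ) ≤ ∑ i ∈ Finset.range τ,
          ((⟪x, v i⟫ - ⟪xstar, v i⟫) - (⟪x, v (i+1)⟫ - ⟪xstar, v (i+1)⟫))^2 :=
        Finset.sum_nonneg fun i _ => sq_nonneg _
      positivity
    have hz : ((0:ℝ)) ^ 2 + (∑ _i ∈ Finset.range τ, (0:ℝ)^2) + (0:ℝ)^2 = 0 := by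
      simp
    rw [hz]
    nlinarith
  · rw [hGx xstar]
    simp only [sub_self]
    have hz : ((0:ℝ)) ^ 2 + (∑ _i ∈ Finset.range τ, (0:ℝ)^2) + (0:ℝ)^2 = 0 := by
      simp
    rw [hz, add_zero, hD, hsdef]
    field_simp
    ring
  · have hnormsq : ‖xstar‖^2 = ∑ r ∈ Finset.range (τ+1), (s * ((τ:ℝ)+1-(r:ℝ)))^2 := by
      have h1 : ⟪xstar, xstar⟫ = ∑ r ∈ Finset.range (τ+1),
          (a * (1 - ((r : ℝ) + 1) / (((τ+1:ℕ) : ℝ) + 1))) * ⟪xstar, v r⟫ := by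
        nth_rewrite 2 [hxstar]
        rw [inner_sum]
        apply Finset.sum_congr rfl
        intro r _
        rw [real_inner_smul_right]
      rw [← real_inner_self_eq_norm_sq, h1]
      apply Finset.sum_congr rfl
      intro r hr
      have hrτ : r ≤ τ := by have := Finset.mem_range.mp hr; omega
      rw [hip r hrτ, hcoef r hrτ, sq]
    rw [hnormsq]
    have h2 : ∑ r ∈ Finset.range (τ+1), (s * ((τ:ℝ)+1-(r:ℝ)))^2
        = s^2 * ∑ r ∈ Finset.range (τ+1), (((τ+1:ℕ):ℝ) - (r:ℝ))^2 := by
      rw [Finset.mul_sum]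
      apply Finset.sum_congr rfl
      intro r _
      push_cast
      ring
    rw [h2, sumsq' (τ+1), hsdef]
    push_cast
    have h1 : (0:ℝ) < (τ:ℝ)+1 := by positivity
    have ha2 : (0:ℝ) < a^2 := by positivity
    rw [div_pow, div_mul_div_comm, div_le_div_iff₀ (by positivity) (by norm_num)]
    nlinarith [mul_pos (mul_pos ha2 h1) hτ2]
end

section
/- The point x* := C·Σ_{r=0}^k q^{r+1}·v_r minimizes F over E, and the minimum value is F(x*) = −(λC²/8)·(√Q − 1)². Moreover F is λ-strongly convex, i.e., x ↦ F(x) − (λ/2)‖x‖² is convex. -/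
open scoped RealInnerProductSpace

lemma key_id (lam C q Q : ℝ) (hK : (1 - q)^2 * (Q - 1) = 4 * q) :
    ∀ k : ℕ, 1 ≤ k → ∀ u : ℕ → ℝ, ∀ N : ℝ,
    lam*(Q-1)/8 * ((u 0)^2 - 2*C*(u 0) + (1-q)*(u k)^2
        + ∑ r ∈ Finset.Icc 1 k, (u (r-1) - u r)^2) + lam/2*N
    = -(lam*(Q-1)/8*C^2*q)
      + lam*(Q-1)/8 * ((u 0 - C*q)^2 + (1-q)*(u k - C*q^(k+1))^2
        + ∑ r ∈ Finset.Icc 1 k, ((u (r-1) - u r) - (C*q^r - C*q^(r+1)))^2)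
      + lam/2*(N - 2*∑ r ∈ Finset.range (k+1), (C*q^(r+1)) * u r
        + ∑ r ∈ Finset.range (k+1), (C*q^(r+1))^2) := by
  intro k
  induction k with
  | zero => omega
  | succ n ih =>
    intro _ u N
    rcases Nat.eq_zero_or_pos n with h0 | hpos
    · subst h0
      simp only [Finset.Icc_self, Finset.sum_singleton, Finset.sum_range_succ,
        Finset.range_one, Finset.sum_singleton]
      norm_num
      linear_combination (lam*C^2*(q+q^3)/8 - lam*C*q*(u 1)/4 - lam*C*(u 0)/4) * hK
    · have hn : 1 ≤ n := hpos
      have H := ih hn u N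
      rw [Finset.sum_Icc_succ_top (by omega : 1 ≤ n + 1),
        Finset.sum_Icc_succ_top (by omega : 1 ≤ n + 1),
        Finset.sum_range_succ (fun r => (C*q^(r+1))^2) (n+1),
        Finset.sum_range_succ (fun r => C*q^(r+1) * u r) (n+1)]
      simp only [Nat.add_sub_cancel]
      linear_combination H + (lam*C^2*(q^(n+1))^2*q/8 - lam*C*q^(n+1)*(u (n+1))/4) * hK

lemma sq_inner_convex {d : ℕ} (w : EuclideanSpace ℝ (Fin d)) :
    ConvexOn ℝ Set.univ fun x : EuclideanSpace ℝ (Fin d) => ⟪x, w⟫ ^ 2 := by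
  refine ⟨convex_univ, fun x _ y _ a b ha hb hab => ?_⟩
  simp only [inner_add_left, real_inner_smul_left, smul_eq_mul]
  nlinarith [sq_nonneg (⟪x, w⟫ - ⟪y, w⟫), mul_nonneg ha hb, sq_nonneg (⟪x, w⟫ + ⟪y, w⟫)]

lemma lin_inner_concave {d : ℕ} (w : EuclideanSpace ℝ (Fin d)) (c : ℝ) :
    ConcaveOn ℝ Set.univ fun x : EuclideanSpace ℝ (Fin d) => c * ⟪x, w⟫ := by
  refine ⟨convex_univ, fun x _ y _ a b ha hb hab => le_of_eq ?_⟩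
  simp only [inner_add_left, real_inner_smul_left, smul_eq_mul]
  ring

lemma convexOn_finset_sum {d : ℕ} {ι : Type*} (s : Finset ι)
    {f : ι → EuclideanSpace ℝ (Fin d) → ℝ}
    (h : ∀ i ∈ s, ConvexOn ℝ Set.univ (f i)) :
    ConvexOn ℝ Set.univ (fun x => ∑ i ∈ s, f i x) := by
  classical
  induction s using Finset.induction with
  | empty => simpa using convexOn_const (0:ℝ) convex_univ
  | @insert i s hi ih =>
    simp only [Finset.sum_insert hi]
    exact (h i (Finset.mem_insert_self i s)).add (ih fun j hj => h j (Finset.mem_insert_of_mem hj))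

/-- For the smooth strongly convex construction
`F(x) = (λ(Q-1)/8)(⟨x,v₀⟩² - 2C⟨x,v₀⟩ + ζ⟨x,v_k⟩² + Σ_{r=1}^k(⟨x,v_{r-1}⟩-⟨x,v_r⟩)²) + (λ/2)‖x‖²`
with `q = (√Q-1)/(√Q+1)` and `ζ = 1-q`, the point `x* = C Σ_{r=0}^k q^{r+1} v_r` is a
global minimizer with `F(x*) = -(λC²/8)(√Q-1)²`, and `F` is `λ`-strongly convex. -/
theorem stmt_12 {d : ℕ} (k : ℕ) (hk : 1 ≤ k)
    (v : ℕ → EuclideanSpace ℝ (Fin d))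
    (hnorm : ∀ i ≤ k, ‖v i‖ = 1)
    (horth : ∀ i ≤ k, ∀ j ≤ k, i ≠ j → ⟪v i, v j⟫ = 0)
    (lam C Q q ζ : ℝ) (hlam : 0 < lam) (hC : 0 < C) (hQ : 1 < Q)
    (hq : q = (Real.sqrt Q - 1) / (Real.sqrt Q + 1)) (hζ : ζ = 1 - q)
    (F : EuclideanSpace ℝ (Fin d) → ℝ)
    (hF : ∀ x, F x = lam * (Q - 1) / 8 *
      (⟪x, v 0⟫ ^ 2 - 2 * C * ⟪x, v 0⟫ + ζ * ⟪x, v k⟫ ^ 2 +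
        ∑ r ∈ Finset.Icc 1 k, (⟪x, v (r - 1)⟫ - ⟪x, v r⟫) ^ 2) +
      lam / 2 * ‖x‖ ^ 2)
    (xstar : EuclideanSpace ℝ (Fin d))
    (hxstar : xstar = ∑ r ∈ Finset.range (k + 1), (C * q ^ (r + 1)) • v r) :
    IsMinOn F Set.univ xstar ∧
    F xstar = -(lam * C ^ 2 / 8) * (Real.sqrt Q - 1) ^ 2 ∧
    ConvexOn ℝ Set.univ (fun x => F x - lam / 2 * ‖x‖ ^ 2) := by

  set s := Real.sqrt Q with hs
  have hQ0 : (0:ℝ) ≤ Q := by linarith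
  have hs2 : s ^ 2 = Q := Real.sq_sqrt hQ0
  have hs1 : 1 < s := by
    have h := Real.sqrt_lt_sqrt (by norm_num) hQ
    rwa [Real.sqrt_one] at h
  have hsp : (0:ℝ) < s + 1 := by linarith
  have hq0 : 0 < q := by rw [hq]; exact div_pos (by linarith) hsp
  have hq1 : q < 1 := by rw [hq, div_lt_one hsp]; linarith
  have hK : (1 - q)^2 * (Q - 1) = 4 * q := by
    have hQ1 : Q - 1 = (s - 1) * (s + 1) := by linear_combination -hs2
    rw [hq, hQ1]
    field_simp
    ring
  have hα : 0 ≤ lam * (Q - 1) / 8 := by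
    have : (0:ℝ) < Q - 1 := by linarith
    positivity
  -- inner products with xstar
  have hvi : ∀ i, i ≤ k → ⟪xstar, v i⟫ = C * q ^ (i + 1) := by
    intro i hi
    rw [hxstar, sum_inner, Finset.sum_eq_single i]
    · rw [real_inner_smul_left, real_inner_self_eq_norm_sq, hnorm i hi]; ring
    · intro r hr hne
      rw [real_inner_smul_left, horth r (Finset.mem_range_succ_iff.mp hr) i hi hne, mul_zero]
    · intro hmem; exact absurd (Finset.mem_range_succ_iff.mpr hi) hmem
  have hxs : ∀ y : EuclideanSpace ℝ (Fin d),
      ⟪y, xstar⟫ = ∑ r ∈ Finset.range (k+1), C * q ^ (r+1) * ⟪y, v r⟫ := by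
    intro y
    rw [hxstar, inner_sum]
    exact Finset.sum_congr rfl fun r _ => real_inner_smul_right _ _ _
  have hns : ‖xstar‖ ^ 2 = ∑ r ∈ Finset.range (k+1), (C * q ^ (r+1)) ^ 2 := by
    rw [← real_inner_self_eq_norm_sq, hxs xstar]
    refine Finset.sum_congr rfl fun r hr => ?_
    rw [hvi r (Finset.mem_range_succ_iff.mp hr)]; ring
  have hdist : ∀ y : EuclideanSpace ℝ (Fin d),
      ‖y‖ ^ 2 - 2 * ∑ r ∈ Finset.range (k+1), (C * q ^ (r+1)) * ⟪y, v r⟫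
        + ∑ r ∈ Finset.range (k+1), (C * q ^ (r+1)) ^ 2 = ‖y - xstar‖ ^ 2 := by
    intro y
    rw [norm_sub_sq_real, hxs y, hns]
  have hFy : ∀ y : EuclideanSpace ℝ (Fin d),
      F y = -(lam*(Q-1)/8*C^2*q)
        + lam*(Q-1)/8 * ((⟪y, v 0⟫ - C*q)^2 + (1-q)*(⟪y, v k⟫ - C*q^(k+1))^2
          + ∑ r ∈ Finset.Icc 1 k, ((⟪y, v (r-1)⟫ - ⟪y, v r⟫) - (C*q^r - C*q^(r+1)))^2)
        + lam/2 * ‖y - xstar‖^2 := by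
    intro y
    have h := key_id lam C q Q hK k hk (fun r => ⟪y, v r⟫) (‖y‖^2)
    rw [hF y, hζ, ← hdist y]
    exact h
  have hFstar : F xstar = -(lam*(Q-1)/8*C^2*q) := by
    rw [hFy xstar]
    have hsum : ∑ r ∈ Finset.Icc 1 k,
        ((⟪xstar, v (r-1)⟫ - ⟪xstar, v r⟫) - (C*q^r - C*q^(r+1)))^2 = 0 := by
      refine Finset.sum_eq_zero fun r hr => ?_
      obtain ⟨hr1, hrk⟩ := Finset.mem_Icc.mp hr
      rw [hvi (r-1) (by omega), hvi r hrk]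
      have hr' : r - 1 + 1 = r := by omega
      rw [hr']; ring
    rw [hsum, hvi 0 (by omega), hvi k le_rfl, sub_self]
    simp
  refine ⟨?_, ?_, ?_⟩
  · rw [isMinOn_iff]
    intro y _
    rw [hFstar, hFy y]
    have h1 : 0 ≤ (⟪y, v 0⟫ - C*q)^2 := sq_nonneg _
    have h2 : 0 ≤ (1-q)*(⟪y, v k⟫ - C*q^(k+1))^2 :=
      mul_nonneg (by linarith) (sq_nonneg _)
    have h3 : 0 ≤ ∑ r ∈ Finset.Icc 1 k,
        ((⟪y, v (r-1)⟫ - ⟪y, v r⟫) - (C*q^r - C*q^(r+1)))^2 :=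
      Finset.sum_nonneg fun r _ => sq_nonneg _
    have h4 : 0 ≤ ‖y - xstar‖^2 := sq_nonneg _
    have h5 := mul_nonneg hα (by linarith : 0 ≤ (⟪y, v 0⟫ - C*q)^2
      + (1-q)*(⟪y, v k⟫ - C*q^(k+1))^2 + ∑ r ∈ Finset.Icc 1 k,
        ((⟪y, v (r-1)⟫ - ⟪y, v r⟫) - (C*q^r - C*q^(r+1)))^2)
    have h6 := mul_nonneg (by linarith : (0:ℝ) ≤ lam/2) h4
    linarith
  · rw [hFstar, hq]
    have hQ1 : Q - 1 = (s - 1) * (s + 1) := by linear_combination -hs2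
    rw [hQ1]
    field_simp
  · have hfun : (fun x : EuclideanSpace ℝ (Fin d) => F x - lam/2 * ‖x‖^2)
        = fun x => lam*(Q-1)/8 * (⟪x, v 0⟫^2 - 2*C*⟪x, v 0⟫ + ζ*⟪x, v k⟫^2
          + ∑ r ∈ Finset.Icc 1 k, (⟪x, v (r-1)⟫ - ⟪x, v r⟫)^2) := by
      funext x
      rw [hF x]; ring
    rw [hfun]
    have hζ0 : 0 ≤ ζ := by rw [hζ]; linarith
    have hsumc : ConvexOn ℝ Set.univ (fun x : EuclideanSpace ℝ (Fin d) =>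
        ∑ r ∈ Finset.Icc 1 k, (⟪x, v (r-1)⟫ - ⟪x, v r⟫)^2) := by
      refine convexOn_finset_sum _ fun r _ => ?_
      have : (fun x : EuclideanSpace ℝ (Fin d) => (⟪x, v (r-1)⟫ - ⟪x, v r⟫)^2)
          = fun x => ⟪x, v (r-1) - v r⟫^2 := by
        funext x; rw [inner_sub_right]
      rw [this]
      exact sq_inner_convex _
    have hζsq : ConvexOn ℝ Set.univ (fun x : EuclideanSpace ℝ (Fin d) => ζ * ⟪x, v k⟫^2) := by
      have h := (sq_inner_convex (d := d) (v k)).smul hζ0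
      simpa [smul_eq_mul] using h
    have hbig : ConvexOn ℝ Set.univ (fun x : EuclideanSpace ℝ (Fin d) =>
        ⟪x, v 0⟫^2 - 2*C*⟪x, v 0⟫ + ζ*⟪x, v k⟫^2
          + ∑ r ∈ Finset.Icc 1 k, (⟪x, v (r-1)⟫ - ⟪x, v r⟫)^2) :=
      (((sq_inner_convex (v 0)).sub (lin_inner_concave (v 0) (2*C))).add hζsq).add hsumc
    have h := hbig.smul hα
    simpa [smul_eq_mul] using h
end

section
/- Let x* := C·Σ_{r=0}^k q^{r+1}·v_r (the minimizer of F). Then F(0) − F(x*) = (λC²/8)·(√Q − 1)², and for every integer t with 0 ≤ t ≤ k and every x ∈ E satisfying ⟨x, v_r⟩ = 0 for all r with t ≤ r ≤ k, one has F(x) − F(x*) ≥ (F(0) − F(x*)) · (q^{2t} − q^{2k+2}) / √Q. -/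
open scoped RealInnerProductSpace

set_option maxHeartbeats 1000000 in
/-- For the smooth strongly convex construction `F` with minimizer
`x* = C Σ_{r=0}^k q^{r+1} v_r`, one has `F(0) - F(x*) = (λC²/8)(√Q-1)²`, and every
`x` with `⟨x, v_r⟩ = 0` for all `t ≤ r ≤ k` (`0 ≤ t ≤ k`) satisfies
`F(x) - F(x*) ≥ (F(0) - F(x*)) (q^{2t} - q^{2k+2}) / √Q`. -/
theorem stmt_13 {d : ℕ} (k : ℕ) (hk : 1 ≤ k)
    (v : ℕ → EuclideanSpace ℝ (Fin d))
    (hnorm : ∀ i ≤ k, ‖v i‖ = 1)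
    (horth : ∀ i ≤ k, ∀ j ≤ k, i ≠ j → ⟪v i, v j⟫ = 0)
    (lam C Q q ζ : ℝ) (hlam : 0 < lam) (hC : 0 < C) (hQ : 1 < Q)
    (hq : q = (Real.sqrt Q - 1) / (Real.sqrt Q + 1)) (hζ : ζ = 1 - q)
    (F : EuclideanSpace ℝ (Fin d) → ℝ)
    (hF : ∀ x, F x = lam * (Q - 1) / 8 *
      (⟪x, v 0⟫ ^ 2 - 2 * C * ⟪x, v 0⟫ + ζ * ⟪x, v k⟫ ^ 2 +
        ∑ r ∈ Finset.Icc 1 k, (⟪x, v (r - 1)⟫ - ⟪x, v r⟫) ^ 2) +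
      lam / 2 * ‖x‖ ^ 2)
    (xstar : EuclideanSpace ℝ (Fin d))
    (hxstar : xstar = ∑ r ∈ Finset.range (k + 1), (C * q ^ (r + 1)) • v r) :
    F 0 - F xstar = lam * C ^ 2 / 8 * (Real.sqrt Q - 1) ^ 2 ∧
    ∀ t ≤ k, ∀ x : EuclideanSpace ℝ (Fin d),
      (∀ r, t ≤ r → r ≤ k → ⟪x, v r⟫ = 0) →
      F x - F xstar ≥
        (F 0 - F xstar) * (q ^ (2 * t) - q ^ (2 * k + 2)) / Real.sqrt Q := by
  subst hζ
  set s := Real.sqrt Q with hs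
  have hsQ : s ^ 2 = Q := Real.sq_sqrt (by linarith)
  have hs1 : 1 < s := by nlinarith [Real.sqrt_nonneg Q]
  have hsp : s + 1 ≠ 0 := by linarith
  have hq0 : 0 < q := by rw [hq]; apply div_pos <;> linarith
  have hq1 : q < 1 := by rw [hq, div_lt_one (by linarith)]; linarith
  have hkey : (Q - 1) * (1 - q) ^ 2 = 4 * q := by
    rw [hq]; field_simp; nlinarith [hsQ]
  have hq2ne : q ^ 2 - 1 ≠ 0 := by nlinarith
  have hq2ne1 : (q ^ 2 : ℝ) ≠ 1 := fun h => hq2ne (by rw [h]; ring)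
  have geo := geom_sum_eq hq2ne1
  -- inner products with xstar
  have hxsv : ∀ j ≤ k, ⟪xstar, v j⟫ = C * q ^ (j + 1) := by
    intro j hj
    rw [hxstar, sum_inner]
    rw [Finset.sum_eq_single j]
    · rw [real_inner_smul_left, real_inner_self_eq_norm_sq, hnorm j hj]; ring
    · intro b hb hbj
      rw [real_inner_smul_left, horth b (by simp at hb; omega) j hj hbj, mul_zero]
    · intro h; exact absurd (Finset.mem_range.mpr (by omega)) h
  have hxsn : ‖xstar‖ ^ 2
      = ∑ r ∈ Finset.range (k + 1), C * q ^ (r + 1) * (C * q ^ (r + 1)) := by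
    rw [← real_inner_self_eq_norm_sq]
    nth_rewrite 2 [hxstar]
    rw [inner_sum]
    refine Finset.sum_congr rfl fun r hr => ?_
    rw [real_inner_smul_right, hxsv r (by simp at hr; omega)]
  -- the vanishing linear term (first-order conditions at xstar)
  have hstar : ∀ B : ℕ → ℝ, ∀ n, 1 ≤ n →
      2 * (lam * (Q - 1) / 8) * ((C * q - C) * B 0 + (1 - q) * (C * q ^ (n + 1)) * B n
        + ∑ r ∈ Finset.Icc 1 n, (C * q ^ r - C * q ^ (r + 1)) * (B (r - 1) - B r))
      + lam * ∑ r ∈ Finset.range (n + 1), C * q ^ (r + 1) * B r = 0 := by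
    intro B n hn
    induction n, hn using Nat.le_induction with
    | base =>
      simp only [Finset.Icc_self, Finset.sum_singleton, Finset.sum_range_succ,
        Finset.sum_range_zero, Nat.sub_self]
      linear_combination (-(lam * C / 4) * (B 0 + q * B 1)) * hkey
    | succ n hn ih =>
      rw [Finset.sum_Icc_succ_top (by omega), Finset.sum_range_succ]
      simp only [Nat.add_sub_cancel]
      linear_combination ih - (lam * C * q ^ (n + 1) * B (n + 1) / 4) * hkey
  -- the master identity
  have master : ∀ x : EuclideanSpace ℝ (Fin d),
      F x - F xstar = lam * (Q - 1) / 8 * ((⟪x, v 0⟫ - C * q) ^ 2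
        + (1 - q) * (⟪x, v k⟫ - C * q ^ (k + 1)) ^ 2
        + ∑ r ∈ Finset.Icc 1 k,
            ((⟪x, v (r - 1)⟫ - C * q ^ r) - (⟪x, v r⟫ - C * q ^ (r + 1))) ^ 2)
        + lam / 2 * ‖x - xstar‖ ^ 2 := by
    intro x
    have hxv : ⟪x, xstar⟫ = ∑ r ∈ Finset.range (k + 1), C * q ^ (r + 1) * ⟪x, v r⟫ := by
      rw [hxstar, inner_sum]
      exact Finset.sum_congr rfl fun r _ => real_inner_smul_right x (v r) _
    have hG2 : ∑ r ∈ Finset.Icc 1 k, (⟪xstar, v (r - 1)⟫ - ⟪xstar, v r⟫) ^ 2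
        = ∑ r ∈ Finset.Icc 1 k, (C * q ^ r - C * q ^ (r + 1)) ^ 2 := by
      refine Finset.sum_congr rfl fun r hr => ?_
      obtain ⟨h1, h2⟩ := Finset.mem_Icc.mp hr
      rw [hxsv r h2, hxsv (r - 1) (by omega), Nat.sub_add_cancel h1]
    have hS : ∑ r ∈ Finset.Icc 1 k, (⟪x, v (r - 1)⟫ - ⟪x, v r⟫) ^ 2
        = ∑ r ∈ Finset.Icc 1 k, ((C * q ^ r - C * q ^ (r + 1)) ^ 2
          + ((⟪x, v (r - 1)⟫ - C * q ^ r) - (⟪x, v r⟫ - C * q ^ (r + 1))) ^ 2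
          + 2 * ((C * q ^ r - C * q ^ (r + 1))
            * ((⟪x, v (r - 1)⟫ - C * q ^ r) - (⟪x, v r⟫ - C * q ^ (r + 1))))) := by
      exact Finset.sum_congr rfl fun r hr => by ring
    rw [Finset.sum_add_distrib, Finset.sum_add_distrib, ← Finset.mul_sum] at hS
    have hstar' := hstar (fun r => ⟪x, v r⟫ - C * q ^ (r + 1)) k hk
    beta_reduce at hstar'
    have hU : ∑ r ∈ Finset.Icc 1 k, (C * q ^ r - C * q ^ (r + 1))
          * ((⟪x, v (r - 1)⟫ - C * q ^ (r - 1 + 1)) - (⟪x, v r⟫ - C * q ^ (r + 1)))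
        = ∑ r ∈ Finset.Icc 1 k, (C * q ^ r - C * q ^ (r + 1))
          * ((⟪x, v (r - 1)⟫ - C * q ^ r) - (⟪x, v r⟫ - C * q ^ (r + 1))) := by
      refine Finset.sum_congr rfl fun r hr => ?_
      rw [Nat.sub_add_cancel (Finset.mem_Icc.mp hr).1]
    rw [hU] at hstar'
    have hT : (∑ r ∈ Finset.range (k + 1), C * q ^ (r + 1) * ⟪x, v r⟫)
        - ∑ r ∈ Finset.range (k + 1), C * q ^ (r + 1) * (C * q ^ (r + 1))
        = ∑ r ∈ Finset.range (k + 1), C * q ^ (r + 1) * (⟪x, v r⟫ - C * q ^ (r + 1)) := by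
      rw [← Finset.sum_sub_distrib]
      exact Finset.sum_congr rfl fun r _ => by ring
    rw [hF x, hF xstar, hxsv 0 (by omega), hxsv k le_rfl, hG2,
      norm_sub_sq_real, hxv, hxsn]
    linear_combination (lam * (Q - 1) / 8) * hS + hstar' + lam * hT
  -- Part 1: the value at 0
  have part1 : F 0 - F xstar = lam * C ^ 2 / 8 * (s - 1) ^ 2 := by
    have h0 := master 0
    simp only [inner_zero_left, zero_sub, norm_neg] at h0
    rw [hxsn] at h0
    have e1 : ∑ r ∈ Finset.Icc 1 k, (-(C * q ^ r) - -(C * q ^ (r + 1))) ^ 2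
        = C ^ 2 * (1 - q) ^ 2 * ((∑ r ∈ Finset.range (k + 1), (q ^ 2) ^ r) - 1) := by
      have h1 : ∑ r ∈ Finset.Icc 1 k, (-(C * q ^ r) - -(C * q ^ (r + 1))) ^ 2
          = ∑ r ∈ Finset.Icc 1 k, (C ^ 2 * (1 - q) ^ 2) * (q ^ 2) ^ r := by
        exact Finset.sum_congr rfl fun r hr => by ring
      rw [h1, ← Finset.mul_sum, ← Finset.Ico_add_one_right_eq_Icc,
        Finset.sum_Ico_eq_sub _ (by omega : 1 ≤ k + 1)]
      simp [Finset.sum_range_one]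
    have e2 : ∑ r ∈ Finset.range (k + 1), C * q ^ (r + 1) * (C * q ^ (r + 1))
        = C ^ 2 * q ^ 2 * ∑ r ∈ Finset.range (k + 1), (q ^ 2) ^ r := by
      rw [Finset.mul_sum]
      exact Finset.sum_congr rfl fun r hr => by ring
    rw [e1, e2, geo (k + 1)] at h0
    rw [h0]
    have hw : (q ^ 2) ^ (k + 1) = (q ^ (k + 1)) ^ 2 := by
      rw [← pow_mul, ← pow_mul, Nat.mul_comm]
    rw [hw]
    set w := q ^ (k + 1) with hwdef
    field_simp [hq2ne]
    rw [hq, ← hsQ]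
    field_simp
    ring
  refine ⟨part1, ?_⟩
  -- Part 2: the lower bound
  intro t ht x hx
  have hlb : F x - F xstar ≥ lam / 2 * ‖x - xstar‖ ^ 2 := by
    rw [master x]
    have h1 : (0:ℝ) ≤ (⟪x, v 0⟫ - C * q) ^ 2
        + (1 - q) * (⟪x, v k⟫ - C * q ^ (k + 1)) ^ 2
        + ∑ r ∈ Finset.Icc 1 k,
            ((⟪x, v (r - 1)⟫ - C * q ^ r) - (⟪x, v r⟫ - C * q ^ (r + 1))) ^ 2 :=
      add_nonneg (add_nonneg (sq_nonneg _)
        (mul_nonneg (by linarith) (sq_nonneg _)))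
        (Finset.sum_nonneg fun r _ => sq_nonneg _)
    have h2 := mul_nonneg (by nlinarith : (0:ℝ) ≤ lam * (Q - 1) / 8) h1
    linarith
  have ho : Orthonormal ℝ (fun i : Fin (k + 1) => v i) :=
    ⟨fun i => hnorm i (Nat.lt_succ_iff.mp i.isLt),
     fun {i j} hij => horth i (Nat.lt_succ_iff.mp i.isLt) j (Nat.lt_succ_iff.mp j.isLt)
       (Fin.val_injective.ne hij)⟩
  have hbes : ∑ r ∈ Finset.range (k + 1), ⟪x - xstar, v r⟫ ^ 2 ≤ ‖x - xstar‖ ^ 2 := by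
    have h := ho.sum_inner_products_le (x - xstar) (s := Finset.univ)
    rw [Fin.sum_univ_eq_sum_range (fun r => ‖⟪v r, x - xstar⟫‖ ^ 2) (k + 1)] at h
    refine le_trans (le_of_eq ?_) h
    exact Finset.sum_congr rfl fun r _ => by
      rw [real_inner_comm, Real.norm_eq_abs, sq_abs]
  have hsub : ∑ r ∈ Finset.Icc t k, ⟪x - xstar, v r⟫ ^ 2
      ≤ ∑ r ∈ Finset.range (k + 1), ⟪x - xstar, v r⟫ ^ 2 :=
    Finset.sum_le_sum_of_subset_of_nonneg
      (fun m hm => Finset.mem_range.mpr (by have := (Finset.mem_Icc.mp hm).2; omega))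
      (fun i _ _ => sq_nonneg _)
  have hval : ∑ r ∈ Finset.Icc t k, ⟪x - xstar, v r⟫ ^ 2
      = C ^ 2 * q ^ 2 * ((∑ r ∈ Finset.range (k + 1), (q ^ 2) ^ r)
          - ∑ r ∈ Finset.range t, (q ^ 2) ^ r) := by
    have h1 : ∑ r ∈ Finset.Icc t k, ⟪x - xstar, v r⟫ ^ 2
        = ∑ r ∈ Finset.Icc t k, (C ^ 2 * q ^ 2) * (q ^ 2) ^ r := by
      refine Finset.sum_congr rfl fun r hr => ?_
      obtain ⟨h1, h2⟩ := Finset.mem_Icc.mp hr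
      rw [inner_sub_left, hx r h1 h2, hxsv r h2]
      ring
    rw [h1, ← Finset.Ico_add_one_right_eq_Icc, Finset.sum_Ico_eq_sub _ (by omega : t ≤ k + 1),
      mul_sub, Finset.mul_sum, Finset.mul_sum]
  calc F x - F xstar ≥ lam / 2 * ‖x - xstar‖ ^ 2 := hlb
    _ ≥ lam / 2 * ∑ r ∈ Finset.Icc t k, ⟪x - xstar, v r⟫ ^ 2 :=
        mul_le_mul_of_nonneg_left (le_trans hsub hbes) (by positivity)
    _ = (F 0 - F xstar) * (q ^ (2 * t) - q ^ (2 * k + 2)) / s := by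
        rw [hval, geo (k + 1), geo t, part1]
        have hw : (q ^ 2) ^ (k + 1) = (q ^ (k + 1)) ^ 2 := by
          rw [← pow_mul, ← pow_mul, Nat.mul_comm]
        have hu : (q ^ 2) ^ t = (q ^ t) ^ 2 := by
          rw [← pow_mul, ← pow_mul, Nat.mul_comm]
        have h2t : q ^ (2 * t) = (q ^ t) ^ 2 := by rw [← pow_mul, Nat.mul_comm]
        have h2k : q ^ (2 * k + 2) = (q ^ (k + 1)) ^ 2 := by
          rw [← pow_mul]; ring_nf
        rw [hw, hu, h2t, h2k]
        set u := q ^ t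
        set w := q ^ (k + 1)
        have hsne : s ≠ 0 := by linarith
        field_simp [hq2ne]
        rw [hq]
        field_simp
        ring
end

section
/- Let k ≥ 1 be an integer, let v_0, v_1, …, v_k be orthonormal vectors in E, and let b > 0 and c > 0. Define G(x) = (1/(2√2))·|b − ⟨x,v₀⟩| + (1/(4√k))·Σ_{r=1}^k ψ_c(⟨x,v_{r−1}⟩ − ⟨x,v_r⟩). Then G(x) ≥ 0 for all x, G(b·Σ_{r=0}^k v_r) = 0, and every x ∈ E with |⟨x, v_k⟩| < c/2 satisfies G(x) ≥ b/(4√k) − (2k+1)c/(8√k). -/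
open scoped RealInnerProductSpace

/-- For `ψ_c(z) = max(0, |z| - c)` and
`G(x) = (1/(2√2))|b - ⟨x,v₀⟩| + (1/(4√k)) Σ_{r=1}^k ψ_c(⟨x,v_{r-1}⟩ - ⟨x,v_r⟩)`
with orthonormal `v₀, …, v_k`: `G ≥ 0`, `G(b Σ_{r=0}^k v_r) = 0`, and every `x` with
`|⟨x, v_k⟩| < c/2` satisfies `G(x) ≥ b/(4√k) - (2k+1)c/(8√k)`. -/
theorem stmt_14 {d : ℕ} (k : ℕ) (hk : 1 ≤ k)
    (v : ℕ → EuclideanSpace ℝ (Fin d))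
    (hnorm : ∀ i ≤ k, ‖v i‖ = 1)
    (horth : ∀ i ≤ k, ∀ j ≤ k, i ≠ j → ⟪v i, v j⟫ = 0)
    (b c : ℝ) (hb : 0 < b) (hc : 0 < c)
    (ψ : ℝ → ℝ) (hψ : ∀ z, ψ z = max 0 (|z| - c))
    (G : EuclideanSpace ℝ (Fin d) → ℝ)
    (hG : ∀ x, G x = (1 / (2 * Real.sqrt 2)) * |b - ⟪x, v 0⟫| +
      (1 / (4 * Real.sqrt k)) *
        ∑ r ∈ Finset.Icc 1 k, ψ (⟪x, v (r - 1)⟫ - ⟪x, v r⟫)) :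
    (∀ x, 0 ≤ G x) ∧
    G (b • ∑ r ∈ Finset.range (k + 1), v r) = 0 ∧
    (∀ x : EuclideanSpace ℝ (Fin d), |⟪x, v k⟫| < c / 2 →
      G x ≥ b / (4 * Real.sqrt k) - (2 * (k : ℝ) + 1) * c / (8 * Real.sqrt k)) := by
  have hsk1 : (1:ℝ) ≤ Real.sqrt k := by
    rw [show (1:ℝ) = Real.sqrt 1 by simp]
    exact Real.sqrt_le_sqrt (by exact_mod_cast hk)
  have hsk : (0:ℝ) < Real.sqrt k := lt_of_lt_of_le one_pos hsk1
  have hs2 : (0:ℝ) < Real.sqrt 2 := by positivity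
  set A := 1 / (2 * Real.sqrt 2) with hAdef
  set B := 1 / (4 * Real.sqrt k) with hBdef
  have hA : 0 < A := by positivity
  have hB : 0 < B := by positivity
  have hBA : B ≤ A := by
    apply one_div_le_one_div_of_le (by positivity)
    have h2 : Real.sqrt 2 ≤ 2 := by
      nlinarith [Real.sq_sqrt (by norm_num : (2:ℝ) ≥ 0), Real.sqrt_nonneg 2]
    nlinarith
  have hψ0 : ∀ z, 0 ≤ ψ z := fun z => by rw [hψ]; exact le_max_left _ _
  have hψ1 : ∀ z, |z| - c ≤ ψ z := fun z => by rw [hψ]; exact le_max_right _ _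
  refine ⟨?_, ?_, ?_⟩
  · intro x
    rw [hG]
    apply add_nonneg
    · positivity
    · exact mul_nonneg hB.le (Finset.sum_nonneg fun r _ => hψ0 _)
  · have hinner : ∀ i ≤ k,
        ⟪(b • ∑ r ∈ Finset.range (k+1), v r : EuclideanSpace ℝ (Fin d)), v i⟫ = b := by
      intro i hi
      rw [real_inner_smul_left, sum_inner, Finset.sum_eq_single i]
      · rw [real_inner_self_eq_norm_sq, hnorm i hi]; ring
      · intro r hr hri
        exact horth r (Nat.lt_succ_iff.mp (Finset.mem_range.mp hr)) i hi hri
      · intro h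
        exact absurd (Finset.mem_range.mpr (Nat.lt_succ_of_le hi)) h
    rw [hG]
    rw [hinner 0 (Nat.zero_le k)]
    have : ∀ r ∈ Finset.Icc 1 k,
        ψ (⟪(b • ∑ r ∈ Finset.range (k+1), v r : EuclideanSpace ℝ (Fin d)), v (r-1)⟫
          - ⟪(b • ∑ r ∈ Finset.range (k+1), v r : EuclideanSpace ℝ (Fin d)), v r⟫) = 0 := by
      intro r hr
      obtain ⟨hr1, hr2⟩ := Finset.mem_Icc.mp hr
      rw [hinner (r-1) (le_trans (Nat.sub_le r 1) hr2), hinner r hr2]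
      rw [hψ]
      simp [le_of_lt hc]
    rw [Finset.sum_congr rfl this]
    simp
  · intro x hx
    set a : ℕ → ℝ := fun r => ⟪x, v r⟫ with ha
    have tele : ∑ r ∈ Finset.Icc 1 k, (a (r-1) - a r) = a 0 - a k := by
      rw [show Finset.Icc 1 k = Finset.Ico 1 (k+1) by rw [Finset.Ico_add_one_right_eq_Icc], Finset.sum_Ico_eq_sum_range]
      have : ∀ i ∈ Finset.range (k + 1 - 1), a (1 + i - 1) - a (1 + i) = a i - a (i+1) := by
        intro i _
        have h1 : 1 + i - 1 = i := by omega
        have h2 : 1 + i = i + 1 := by omega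
        rw [h1, h2]
      rw [Finset.sum_congr rfl this, show k + 1 - 1 = k from rfl, Finset.sum_range_sub' a k]
    have hsum : |a 0 - a k| - (k:ℝ)*c ≤ ∑ r ∈ Finset.Icc 1 k, ψ (a (r-1) - a r) := by
      calc |a 0 - a k| - (k:ℝ)*c
          = |∑ r ∈ Finset.Icc 1 k, (a (r-1) - a r)| - (k:ℝ)*c := by rw [tele]
        _ ≤ (∑ r ∈ Finset.Icc 1 k, |a (r-1) - a r|) - (k:ℝ)*c := by
            gcongr; exact Finset.abs_sum_le_sum_abs _ _
        _ = ∑ r ∈ Finset.Icc 1 k, (|a (r-1) - a r| - c) := by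
            rw [Finset.sum_sub_distrib, Finset.sum_const, Nat.card_Icc]
            simp [hk]
        _ ≤ _ := Finset.sum_le_sum fun r _ => hψ1 _
    have hak : a k < c / 2 := lt_of_le_of_lt (le_abs_self _) hx
    have htri : b - c/2 ≤ |b - a 0| + |a 0 - a k| := by
      have h1 : |b - a k| ≤ |b - a 0| + |a 0 - a k| := by
        calc |b - a k| = |(b - a 0) + (a 0 - a k)| := by ring_nf
          _ ≤ _ := abs_add_le _ _
      have h2 : b - a k ≤ |b - a k| := le_abs_self _
      linarith
    have hGx : G x = A * |b - a 0| + B * ∑ r ∈ Finset.Icc 1 k, ψ (a (r-1) - a r) := hG x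
    have key : B * (b - c/2 - (k:ℝ)*c) ≤ G x := by
      rw [hGx]
      have h1 : B * |b - a 0| ≤ A * |b - a 0| :=
        mul_le_mul_of_nonneg_right hBA (abs_nonneg _)
      have h2 : B * (|a 0 - a k| - (k:ℝ)*c) ≤ B * ∑ r ∈ Finset.Icc 1 k, ψ (a (r-1) - a r) :=
        mul_le_mul_of_nonneg_left hsum hB.le
      nlinarith
    have heq : B * (b - c/2 - (k:ℝ)*c) = b / (4 * Real.sqrt k) - (2 * (k : ℝ) + 1) * c / (8 * Real.sqrt k) := by
      rw [hBdef]
      field_simp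
      ring
    linarith [key, heq.symm.le]
end

section
/- For every c > 0, the function φ_c is convex, differentiable on all of ℝ, satisfies φ_c(z) = 0 whenever |z| ≤ c, its derivative is Lipschitz continuous with constant 4 (i.e., φ_c is 4-smooth), and 0 ≤ z² − φ_c(z) ≤ 2c² for every z ∈ ℝ. -/
open Set

private lemma hasDerivAt_maxsq (x : ℝ) :
    HasDerivAt (fun y : ℝ => max y 0 ^ 2) (2 * max x 0) x := by
  rcases lt_trichotomy x 0 with hx | hx | hx
  · rw [max_eq_right hx.le, mul_zero]
    have h0 : (fun y : ℝ => max y 0 ^ 2) =ᶠ[nhds x] fun _ => (0:ℝ) := by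
      filter_upwards [Iio_mem_nhds hx] with y hy
      rw [max_eq_right (le_of_lt hy)]; ring
    exact (hasDerivAt_const x (0:ℝ)).congr_of_eventuallyEq h0
  · subst hx
    rw [max_self, mul_zero]
    rw [hasDerivAt_iff_tendsto_slope]
    have h1 : (fun y : ℝ => max y 0) =ᶠ[nhdsWithin 0 {(0:ℝ)}ᶜ]
        slope (fun y : ℝ => max y 0 ^ 2) 0 := by
      filter_upwards [self_mem_nhdsWithin] with y hy
      have hy' : y ≠ 0 := hy
      rcases le_or_gt y 0 with h | h
      · simp [slope_def_field, max_eq_right h]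
      · rw [slope_def_field, max_eq_left h.le, max_self]
        field_simp
        ring
    refine Filter.Tendsto.congr' h1 ?_
    have hcont : ContinuousAt (fun y : ℝ => max y 0) 0 := by fun_prop
    have := hcont.tendsto
    simp only [max_self] at this
    exact this.mono_left nhdsWithin_le_nhds
  · rw [max_eq_left hx.le]
    have h0 : (fun y : ℝ => y ^ 2) =ᶠ[nhds x] fun y : ℝ => max y 0 ^ 2 := by
      filter_upwards [Ioi_mem_nhds hx] with y hy
      rw [max_eq_left (le_of_lt hy)]
    have h2 : HasDerivAt (fun y : ℝ => y ^ 2) (2 * x) x := by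
      simpa using (hasDerivAt_pow 2 x)
    exact h2.congr_of_eventuallyEq h0.symm

/-- For every `c > 0`, the function `φ_c` (defined piecewise as `0` for
`|z| ≤ c`, `2(|z|-c)²` for `c < |z| ≤ 2c`, and `z² - 2c²` for `|z| > 2c`) is convex,
vanishes on `[-c, c]`, is differentiable everywhere with a `4`-Lipschitz derivative
(i.e. is `4`-smooth), and satisfies `0 ≤ z² - φ_c(z) ≤ 2c²` for every `z`. -/
theorem stmt_15 (c : ℝ) (hc : 0 < c)
    (φ : ℝ → ℝ)
    (hφ : ∀ z, φ z =
      if |z| ≤ c then 0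
      else if |z| ≤ 2 * c then 2 * (|z| - c) ^ 2
      else z ^ 2 - 2 * c ^ 2) :
    ConvexOn ℝ Set.univ φ ∧
    (∀ z, |z| ≤ c → φ z = 0) ∧
    (∃ φ' : ℝ → ℝ, (∀ z, HasDerivAt φ (φ' z) z) ∧ LipschitzWith 4 φ') ∧
    (∀ z, 0 ≤ z ^ 2 - φ z ∧ z ^ 2 - φ z ≤ 2 * c ^ 2) := by
  have hφF : ∀ z, φ z = 2 * max (z - c) 0 ^ 2 + 2 * max (-z - c) 0 ^ 2
      - max (z - 2*c) 0 ^ 2 - max (-z - 2*c) 0 ^ 2 := by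
    intro z
    rw [hφ z]
    rcases le_total z 0 with hz | hz
    · rw [abs_of_nonpos hz]
      split_ifs with h1 h2
      · rw [max_eq_right (by linarith : z - c ≤ 0), max_eq_right (by linarith : -z - c ≤ 0),
          max_eq_right (by linarith : z - 2*c ≤ 0), max_eq_right (by linarith : -z - 2*c ≤ 0)]
        ring
      · push_neg at h1
        rw [max_eq_right (by linarith : z - c ≤ 0), max_eq_left (by linarith : 0 ≤ -z - c),
          max_eq_right (by linarith : z - 2*c ≤ 0), max_eq_right (by linarith : -z - 2*c ≤ 0)]
        ring
      · push_neg at h1 h2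
        rw [max_eq_right (by linarith : z - c ≤ 0), max_eq_left (by linarith : 0 ≤ -z - c),
          max_eq_right (by linarith : z - 2*c ≤ 0), max_eq_left (by linarith : 0 ≤ -z - 2*c)]
        ring
    · rw [abs_of_nonneg hz]
      split_ifs with h1 h2
      · rw [max_eq_right (by linarith : z - c ≤ 0), max_eq_right (by linarith : -z - c ≤ 0),
          max_eq_right (by linarith : z - 2*c ≤ 0), max_eq_right (by linarith : -z - 2*c ≤ 0)]
        ring
      · push_neg at h1
        rw [max_eq_left (by linarith : 0 ≤ z - c), max_eq_right (by linarith : -z - c ≤ 0),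
          max_eq_right (by linarith : z - 2*c ≤ 0), max_eq_right (by linarith : -z - 2*c ≤ 0)]
        ring
      · push_neg at h1 h2
        rw [max_eq_left (by linarith : 0 ≤ z - c), max_eq_right (by linarith : -z - c ≤ 0),
          max_eq_left (by linarith : 0 ≤ z - 2*c), max_eq_right (by linarith : -z - 2*c ≤ 0)]
        ring
  have hderiv : ∀ z, HasDerivAt φ
      (max (min (4*(z - c)) (2*z)) (min 0 (max (4*(z + c)) (2*z)))) z := by
    intro z
    have d1 : HasDerivAt (fun y : ℝ => max (y - c) 0 ^ 2) (2 * max (z - c) 0) z := by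
      simpa [Function.comp_def] using (hasDerivAt_maxsq (z - c)).comp z ((hasDerivAt_id z).sub_const c)
    have d2 : HasDerivAt (fun y : ℝ => max (-y - c) 0 ^ 2) (-(2 * max (-z - c) 0)) z := by
      have := (hasDerivAt_maxsq (-z - c)).comp z (((hasDerivAt_id z).neg).sub_const c)
      simpa [mul_comm, Function.comp_def] using this
    have d3 : HasDerivAt (fun y : ℝ => max (y - 2*c) 0 ^ 2) (2 * max (z - 2*c) 0) z := by
      simpa [Function.comp_def] using (hasDerivAt_maxsq (z - 2*c)).comp z ((hasDerivAt_id z).sub_const (2*c))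
    have d4 : HasDerivAt (fun y : ℝ => max (-y - 2*c) 0 ^ 2) (-(2 * max (-z - 2*c) 0)) z := by
      have := (hasDerivAt_maxsq (-z - 2*c)).comp z (((hasDerivAt_id z).neg).sub_const (2*c))
      simpa [mul_comm, Function.comp_def] using this
    have h1 : HasDerivAt (fun y : ℝ => 2 * max (y - c) 0 ^ 2 + 2 * max (-y - c) 0 ^ 2
        - max (y - 2*c) 0 ^ 2 - max (-y - 2*c) 0 ^ 2)
        (4 * max (z - c) 0 - 4 * max (-z - c) 0
          - 2 * max (z - 2*c) 0 + 2 * max (-z - 2*c) 0) z := by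
      have := (((d1.const_mul 2).add (d2.const_mul 2)).sub d3).sub d4
      exact this.congr_deriv (by ring)
    have heq : (4 * max (z - c) 0 - 4 * max (-z - c) 0
          - 2 * max (z - 2*c) 0 + 2 * max (-z - 2*c) 0)
        = max (min (4*(z - c)) (2*z)) (min 0 (max (4*(z + c)) (2*z))) := by
      rcases le_total z (-(2*c)) with h | h
      · rw [max_eq_right (by linarith : z - c ≤ 0), max_eq_left (by linarith : 0 ≤ -z - c),
          max_eq_right (by linarith : z - 2*c ≤ 0), max_eq_left (by linarith : 0 ≤ -z - 2*c),
          min_eq_left (by linarith : 4*(z-c) ≤ 2*z), max_eq_right (by linarith : 4*(z+c) ≤ 2*z),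
          min_eq_right (by linarith : 2*z ≤ 0), max_eq_right (by linarith : 4*(z-c) ≤ 2*z)]
        ring
      rcases le_total z (-c) with h2 | h2
      · rw [max_eq_right (by linarith : z - c ≤ 0), max_eq_left (by linarith : 0 ≤ -z - c),
          max_eq_right (by linarith : z - 2*c ≤ 0), max_eq_right (by linarith : -z - 2*c ≤ 0),
          min_eq_left (by linarith : 4*(z-c) ≤ 2*z), max_eq_left (by linarith : 2*z ≤ 4*(z+c)),
          min_eq_right (by linarith : 4*(z+c) ≤ 0), max_eq_right (by linarith : 4*(z-c) ≤ 4*(z+c))]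
        ring
      rcases le_total z c with h3 | h3
      · rw [max_eq_right (by linarith : z - c ≤ 0), max_eq_right (by linarith : -z - c ≤ 0),
          max_eq_right (by linarith : z - 2*c ≤ 0), max_eq_right (by linarith : -z - 2*c ≤ 0),
          min_eq_left (by linarith : 4*(z-c) ≤ 2*z), max_eq_left (by linarith : 2*z ≤ 4*(z+c)),
          min_eq_left (by linarith : (0:ℝ) ≤ 4*(z+c)), max_eq_right (by linarith : 4*(z-c) ≤ 0)]
        ring
      rcases le_total z (2*c) with h4 | h4
      · rw [max_eq_left (by linarith : 0 ≤ z - c), max_eq_right (by linarith : -z - c ≤ 0),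
          max_eq_right (by linarith : z - 2*c ≤ 0), max_eq_right (by linarith : -z - 2*c ≤ 0),
          min_eq_left (by linarith : 4*(z-c) ≤ 2*z), max_eq_left (by linarith : 2*z ≤ 4*(z+c)),
          min_eq_left (by linarith : (0:ℝ) ≤ 4*(z+c)), max_eq_left (by linarith : (0:ℝ) ≤ 4*(z-c))]
        ring
      · rw [max_eq_left (by linarith : 0 ≤ z - c), max_eq_right (by linarith : -z - c ≤ 0),
          max_eq_left (by linarith : 0 ≤ z - 2*c), max_eq_right (by linarith : -z - 2*c ≤ 0),
          min_eq_right (by linarith : 2*z ≤ 4*(z-c)), max_eq_left (by linarith : 2*z ≤ 4*(z+c)),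
          min_eq_left (by linarith : (0:ℝ) ≤ 4*(z+c)), max_eq_left (by linarith : (0:ℝ) ≤ 2*z)]
        ring
    rw [← heq]
    have hφeq : φ = fun y : ℝ => 2 * max (y - c) 0 ^ 2 + 2 * max (-y - c) 0 ^ 2
        - max (y - 2*c) 0 ^ 2 - max (-y - 2*c) 0 ^ 2 := funext hφF
    rw [hφeq]
    exact h1
  have hDmono : Monotone (fun z : ℝ =>
      max (min (4*(z - c)) (2*z)) (min 0 (max (4*(z + c)) (2*z)))) := by
    apply Monotone.max
    · exact Monotone.min (fun a b hab => by linarith)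
        (fun a b hab => by linarith)
    · exact Monotone.min monotone_const
        (Monotone.max (fun a b hab => by linarith)
          (fun a b hab => by linarith))
  refine ⟨?_, ?_, ⟨_, hderiv, ?_⟩, ?_⟩
  · apply Monotone.convexOn_univ_of_deriv
    · exact fun z => (hderiv z).differentiableAt
    · have hd : deriv φ = fun z : ℝ =>
          max (min (4*(z - c)) (2*z)) (min 0 (max (4*(z + c)) (2*z))) :=
        funext fun z => (hderiv z).deriv
      rw [hd]; exact hDmono
  · intro z hz
    rw [hφ z, if_pos hz]
  · have l1 : LipschitzWith 4 (fun z : ℝ => 4*(z - c)) := by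
      apply LipschitzWith.of_dist_le_mul
      intro x y
      rw [Real.dist_eq, Real.dist_eq]
      have h : 4*(x - c) - 4*(y - c) = 4 * (x - y) := by ring
      rw [h, abs_mul, abs_of_nonneg (by norm_num : (0:ℝ) ≤ 4)]
      norm_num
    have l1' : LipschitzWith 4 (fun z : ℝ => 4*(z + c)) := by
      apply LipschitzWith.of_dist_le_mul
      intro x y
      rw [Real.dist_eq, Real.dist_eq]
      have h : 4*(x + c) - 4*(y + c) = 4 * (x - y) := by ring
      rw [h, abs_mul, abs_of_nonneg (by norm_num : (0:ℝ) ≤ 4)]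
      norm_num
    have l2 : LipschitzWith 4 (fun z : ℝ => 2*z) := by
      apply LipschitzWith.of_dist_le_mul
      intro x y
      rw [Real.dist_eq, Real.dist_eq]
      have h : 2*x - 2*y = 2 * (x - y) := by ring
      rw [h, abs_mul, abs_of_nonneg (by norm_num : (0:ℝ) ≤ 2)]
      have habs : (0:ℝ) ≤ |x - y| := abs_nonneg _
      push_cast
      nlinarith
    have l0 : LipschitzWith 4 (fun _ : ℝ => (0:ℝ)) :=
      (LipschitzWith.const 0).weaken (by norm_num)
    have := LipschitzWith.max (LipschitzWith.min l1 l2)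
      (LipschitzWith.min l0 (LipschitzWith.max l1' l2))
    simpa [max_self] using this
  · intro z
    rw [hφ z]
    split_ifs with h1 h2
    · constructor <;> nlinarith [abs_nonneg z, sq_abs z, abs_le.mp h1]
    · push_neg at h1
      constructor <;> nlinarith [sq_abs z, abs_nonneg z]
    · push_neg at h1 h2
      constructor <;> nlinarith [sq_abs z, abs_nonneg z]
end

section
/- Let m ≥ 1 be an integer, let v_1, …, v_m be orthonormal vectors in E, let C > 0, and define F(x) = (C/m)·Σ_{i=1}^m ⟨x, v_i⟩. Then the minimum of F over the unit ball {x : ‖x‖ ≤ 1} equals −C/√m and is attained at −(1/√m)·Σ_{i=1}^m v_i; moreover, every x with ‖x‖ ≤ 1 such that |⟨x, v_i⟩| ≤ 1/(4√m) for at least m/2 of the indices i satisfies F(x) − (−C/√m) ≥ 0.16·C/√m. -/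
open scoped RealInnerProductSpace

theorem aux_ineq (r s t α β : ℝ) (hr : 0 < r) (hst : s + t = r^2) (hs : r^2/2 ≤ s)
    (ht : 0 ≤ t) (hα : 0 ≤ α) (hβ : 0 ≤ β)
    (h1 : 4*α*r ≤ s) (h2 : s*β^2 + t*α^2 ≤ s*t) : α + β ≤ (21/25)*r := by
  have hsle : s ≤ r^2 := by linarith
  have hs0 : 0 < s := by nlinarith
  have hα4 : α ≤ r/4 := by nlinarith
  by_contra hcon
  push_neg at hcon
  have hb : 21/25*r - α < β := by linarith
  have hb0 : 0 ≤ 21/25*r - α := by linarith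
  have hβ2 : (21/25*r - α)^2 < β^2 := by nlinarith
  have h5 : s*(21/25*r - α)^2 ≤ s*β^2 := by nlinarith
  nlinarith [h5, h2, mul_nonneg (by linarith : (0:ℝ) ≤ s - 4*α*r) (by nlinarith : (0:ℝ) ≤ 143/100*s - α*r), mul_nonneg hs0.le (by linarith : (0:ℝ) ≤ 257/400*s - 184/625*r^2)]

theorem cs_fin (U : Finset ℕ) (f : ℕ → ℝ) :
    -Real.sqrt ((U.card : ℝ) * ∑ i ∈ U, f i^2) ≤ ∑ i ∈ U, f i := by
  have h := Finset.sum_mul_sq_le_sq_mul_sq U f (fun _ => 1)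
  simp only [mul_one, one_pow, Finset.sum_const, nsmul_eq_mul] at h
  have hγ0 : 0 ≤ Real.sqrt ((U.card : ℝ) * ∑ i ∈ U, f i^2) := Real.sqrt_nonneg _
  have hγ2 : (Real.sqrt ((U.card : ℝ) * ∑ i ∈ U, f i^2))^2 = (U.card : ℝ) * ∑ i ∈ U, f i^2 :=
    Real.sq_sqrt (mul_nonneg (Nat.cast_nonneg _) (Finset.sum_nonneg fun i _ => sq_nonneg _))
  nlinarith [h]

set_option maxHeartbeats 800000 in
/-- For `F(x) = (C/m) Σ_{i=1}^m ⟨x, v_i⟩` with orthonormal `v_1, …, v_m`,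
the minimum of `F` over the unit ball is `-C/√m`, attained at `-(1/√m) Σ_i v_i`;
moreover every `x` in the unit ball with `|⟨x, v_i⟩| ≤ 1/(4√m)` for at least `m/2`
of the indices satisfies `F(x) - (-C/√m) ≥ 0.16 C/√m`. -/
theorem stmt_17 {d : ℕ} (m : ℕ) (hm : 1 ≤ m)
    (v : ℕ → EuclideanSpace ℝ (Fin d))
    (hnorm : ∀ i < m, ‖v i‖ = 1)
    (horth : ∀ i < m, ∀ j < m, i ≠ j → ⟪v i, v j⟫ = 0)
    (C : ℝ) (hC : 0 < C)
    (F : EuclideanSpace ℝ (Fin d) → ℝ)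
    (hF : ∀ x, F x = C / m * ∑ i ∈ Finset.range m, ⟪x, v i⟫)
    (xstar : EuclideanSpace ℝ (Fin d))
    (hxstar : xstar = -((1 / Real.sqrt m) • ∑ i ∈ Finset.range m, v i)) :
    ‖xstar‖ ≤ 1 ∧
    IsMinOn F {x : EuclideanSpace ℝ (Fin d) | ‖x‖ ≤ 1} xstar ∧
    F xstar = -C / Real.sqrt m ∧
    (∀ x : EuclideanSpace ℝ (Fin d), ‖x‖ ≤ 1 →
      (∃ S ⊆ Finset.range m, (m : ℝ) / 2 ≤ S.card ∧
        ∀ i ∈ S, |⟪x, v i⟫| ≤ 1 / (4 * Real.sqrt m)) →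
      F x - (-C / Real.sqrt m) ≥ 0.16 * C / Real.sqrt m) := by
  set r := Real.sqrt m with hrdef
  have hm0 : (0:ℝ) < m := by exact_mod_cast hm
  have hr : 0 < r := Real.sqrt_pos.mpr hm0
  have hr2 : r^2 = m := Real.sq_sqrt hm0.le
  set s0 : EuclideanSpace ℝ (Fin d) := ∑ i ∈ Finset.range m, v i with hs0def
  have hii : ∀ i < m, ⟪v i, v i⟫ = 1 := by
    intro i hi
    rw [real_inner_self_eq_norm_sq, hnorm i hi]; norm_num
  -- inner of sum
  have hinner_sum : ∀ x : EuclideanSpace ℝ (Fin d),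
      ⟪x, s0⟫ = ∑ i ∈ Finset.range m, ⟪x, v i⟫ := by
    intro x; rw [hs0def, inner_sum]
  have hss : ⟪s0, s0⟫ = (m:ℝ) := by
    rw [hinner_sum, hs0def]
    have : ∀ i ∈ Finset.range m, ⟪∑ j ∈ Finset.range m, v j, v i⟫ = 1 := by
      intro i hi
      rw [sum_inner]
      rw [Finset.sum_eq_single i]
      · exact hii i (Finset.mem_range.mp hi)
      · intro j hj hji
        exact horth j (Finset.mem_range.mp hj) i (Finset.mem_range.mp hi) hji
      · intro h; exact absurd hi h
    rw [Finset.sum_congr rfl this]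
    simp
  have hns0 : ‖s0‖ = r := by
    have h1 : ‖s0‖^2 = r^2 := by
      rw [← real_inner_self_eq_norm_sq, hss, hr2]
    calc ‖s0‖ = Real.sqrt (‖s0‖^2) := (Real.sqrt_sq (norm_nonneg s0)).symm
    _ = Real.sqrt (r^2) := by rw [h1]
    _ = r := Real.sqrt_sq hr.le
  have hxs : ∀ x : EuclideanSpace ℝ (Fin d), ⟪x, s0⟫ ≥ -(‖x‖ * r) := by
    intro x
    have h := abs_real_inner_le_norm x s0
    rw [hns0] at h
    have := neg_abs_le ⟪x, s0⟫
    linarith [abs_nonneg ⟪x, s0⟫]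
  have hxstar_inner : ⟪xstar, s0⟫ = -(r) := by
    rw [hxstar, inner_neg_left, real_inner_smul_left, hss]
    field_simp
    rw [← hr2]
  have hnxstar : ‖xstar‖ = 1 := by
    rw [hxstar, norm_neg, norm_smul, hns0, Real.norm_eq_abs,
      abs_of_pos (by positivity : (0:ℝ) < 1/r), one_div, inv_mul_cancel₀ hr.ne']
  have hFxstar : F xstar = -C / r := by
    rw [hF, ← hinner_sum, hxstar_inner]
    rw [div_mul_eq_mul_div, ← hr2]
    field_simp
  refine ⟨hnxstar.le, ?_, hFxstar, ?_⟩
  · -- min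
    rw [isMinOn_iff]
    intro x hx
    simp only [Set.mem_setOf_eq] at hx
    rw [hF x, hFxstar, ← hinner_sum]
    have h1 : ⟪x, s0⟫ ≥ -(r) := by
      have := hxs x
      nlinarith
    have hCm : 0 < C / (m:ℝ) := by positivity
    have h2 : C/(m:ℝ) * (-(r)) ≤ C/(m:ℝ) * ⟪x, s0⟫ :=
      mul_le_mul_of_nonneg_left h1 hCm.le
    have h3 : C/(m:ℝ) * (-(r)) = -C/r := by
      rw [← hr2]; field_simp
    linarith
  · -- robustness
    intro x hx ⟨S, hS, hcard, hsmall⟩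
    -- Bessel
    have hbessel : ∑ i ∈ Finset.range m, ⟪x, v i⟫^2 ≤ 1 := by
      have hw : Orthonormal ℝ (fun i : Fin m => v i) := by
        rw [orthonormal_iff_ite]
        intro i j
        by_cases hij : i = j
        · simp [hij, hii j.1 j.2, hnorm j.1 j.2]
        · simp only [hij, if_false]
          exact horth i.1 i.2 j.1 j.2 (fun h => hij (Fin.ext h))
      have h := hw.sum_inner_products_le (s := Finset.univ) x
      have heq : ∑ i : Fin m, ‖⟪v i, x⟫‖^2 = ∑ i ∈ Finset.range m, ⟪x, v i⟫^2 := by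
        rw [← Fin.sum_univ_eq_sum_range (fun i => ⟪x, v i⟫^2)]
        refine Finset.sum_congr rfl fun i _ => ?_
        rw [Real.norm_eq_abs, sq_abs, real_inner_comm]
      rw [heq] at h
      calc ∑ i ∈ Finset.range m, ⟪x, v i⟫^2 ≤ ‖x‖^2 := h
      _ ≤ 1 := by nlinarith [norm_nonneg x]
    set T := Finset.range m \ S with hTdef
    obtain ⟨P, hPdef⟩ : ∃ P, ∑ i ∈ S, ⟪x, v i⟫^2 = P := ⟨_, rfl⟩
    obtain ⟨Q, hQdef⟩ : ∃ Q, ∑ i ∈ T, ⟪x, v i⟫^2 = Q := ⟨_, rfl⟩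
    have hsplit : ∀ f : ℕ → ℝ, ∑ i ∈ T, f i + ∑ i ∈ S, f i = ∑ i ∈ Finset.range m, f i :=
      fun f => Finset.sum_sdiff hS
    have hPQ : P + Q ≤ 1 := by
      have := hsplit (fun i => ⟪x, v i⟫^2)
      rw [← hPdef, ← hQdef]; linarith [hbessel]
    have hP0 : 0 ≤ P := hPdef ▸ Finset.sum_nonneg fun i _ => sq_nonneg _
    have hQ0 : 0 ≤ Q := hQdef ▸ Finset.sum_nonneg fun i _ => sq_nonneg _
    obtain ⟨sC, hsCdef⟩ : ∃ sC, (S.card : ℝ) = sC := ⟨_, rfl⟩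
    obtain ⟨tC, htCdef⟩ : ∃ tC, (T.card : ℝ) = tC := ⟨_, rfl⟩
    have hsC0 : 0 ≤ sC := hsCdef ▸ Nat.cast_nonneg _
    have htC0 : 0 ≤ tC := htCdef ▸ Nat.cast_nonneg _
    have hst : sC + tC = r^2 := by
      rw [hr2, ← hsCdef, ← htCdef, hTdef]
      rw [Finset.card_sdiff_of_subset hS]
      have hle : S.card ≤ m := by
        simpa using Finset.card_le_card hS
      rw [Finset.card_range, Nat.cast_sub hle]
      ring
    have hsChalf : r^2/2 ≤ sC := by rw [hr2, ← hsCdef]; exact hcard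
    have hsCpos : 0 < sC := by nlinarith
    -- bound on P
    have hP : P ≤ sC * (1/(16*r^2)) := by
      rw [← hPdef, ← hsCdef]
      have : ∑ i ∈ S, ⟪x, v i⟫^2 ≤ ∑ i ∈ S, (1/(4*r))^2 := by
        refine Finset.sum_le_sum fun i hi => ?_
        have h := hsmall i hi
        calc ⟪x, v i⟫^2 = |⟪x, v i⟫|^2 := (sq_abs _).symm
        _ ≤ (1/(4*r))^2 := by nlinarith [abs_nonneg ⟪x, v i⟫]
      rw [Finset.sum_const, nsmul_eq_mul] at this
      have he : (1/(4*r))^2 = 1/(16*r^2) := by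
        rw [div_pow, one_pow, mul_pow]
        norm_num
      rw [he] at this
      exact this
    obtain ⟨α, hαdef⟩ : ∃ α, Real.sqrt (sC * P) = α := ⟨_, rfl⟩
    obtain ⟨β, hβdef⟩ : ∃ β, Real.sqrt (tC * Q) = β := ⟨_, rfl⟩
    have hα0 : 0 ≤ α := hαdef ▸ Real.sqrt_nonneg _
    have hβ0 : 0 ≤ β := hβdef ▸ Real.sqrt_nonneg _
    have hα2 : α^2 = sC * P := by rw [← hαdef]; exact Real.sq_sqrt (mul_nonneg hsC0 hP0)
    have hβ2 : β^2 = tC * Q := by rw [← hβdef]; exact Real.sq_sqrt (mul_nonneg htC0 hQ0)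
    -- Cauchy-Schwarz on S and T
    have hCSS : -α ≤ ∑ i ∈ S, ⟪x, v i⟫ := by
      have := cs_fin S (fun i => ⟪x, v i⟫)
      rwa [hPdef, hsCdef, hαdef] at this
    have hCST : -β ≤ ∑ i ∈ T, ⟪x, v i⟫ := by
      have := cs_fin T (fun i => ⟪x, v i⟫)
      rwa [hQdef, htCdef, hβdef] at this
    -- apply aux
    have h1 : 4*α*r ≤ sC := by
      have h16 : 16*r^2*α^2 ≤ sC^2 := by
        rw [hα2]
        have hstep : 16*r^2*(sC*P) ≤ 16*r^2*(sC*(sC*(1/(16*r^2)))) := by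
          apply mul_le_mul_of_nonneg_left _ (by positivity)
          exact mul_le_mul_of_nonneg_left hP hsC0
        have he : 16*r^2*(sC*(sC*(1/(16*r^2)))) = sC^2 := by
          have : (16:ℝ)*r^2 ≠ 0 := by positivity
          field_simp
        linarith [hstep, he.le, he.ge]
      nlinarith [sq_nonneg (sC - 4*α*r), mul_nonneg (mul_nonneg hα0 hr.le) hsC0]
    have h2 : sC*β^2 + tC*α^2 ≤ sC*tC := by
      rw [hα2, hβ2]
      have : sC*(tC*Q) + tC*(sC*P) = sC*tC*(P+Q) := by ring
      rw [this]
      nlinarith [mul_nonneg hsC0 htC0]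
    have haux := aux_ineq r sC tC α β hr hst hsChalf htC0 hα0 hβ0 h1 h2
    -- conclude
    have hsum_lb : -(21/25)*r ≤ ∑ i ∈ Finset.range m, ⟪x, v i⟫ := by
      have := hsplit (fun i => ⟪x, v i⟫)
      have h' : -β + -α ≤ ∑ i ∈ T, ⟪x, v i⟫ + ∑ i ∈ S, ⟪x, v i⟫ := add_le_add hCST hCSS
      linarith
    rw [hF, ge_iff_le]
    have hCm : 0 < C / (m:ℝ) := by positivity
    have h6 : C/(m:ℝ) * (-(21/25)*r) ≤ C/(m:ℝ) * ∑ i ∈ Finset.range m, ⟪x, v i⟫ :=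
      mul_le_mul_of_nonneg_left hsum_lb hCm.le
    have h7 : C/(m:ℝ) * (-(21/25)*r) = -(21/25) * (C/r) := by
      rw [← hr2]; field_simp
    have h8 : -C/r = -(C/r) := by ring
    have h9 : (0.16:ℝ) * C / r = (4/25) * (C/r) := by norm_num; ring
    rw [h8, h9]
    linarith
end

section
/- Let m ≥ 1 be an integer, let v_1, …, v_m be orthonormal vectors in E, and define F(x) = (1/√m)·Σ_{i=1}^m ⟨x, v_i⟩ + ‖x‖²/2. Then F attains its global minimum over E at x* = −(1/√m)·Σ_{i=1}^m v_i with F(x*) = −1/2, and every x ∈ E such that |⟨x, v_i⟩| ≤ 1/(4√m) for at least m/2 of the indices i satisfies F(x) ≥ −23/64; hence F(x) − F(x*) ≥ 9/64 for every such x. -/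
open scoped RealInnerProductSpace

/-- For `F(x) = (1/√m) Σ_{i=1}^m ⟨x, v_i⟩ + ‖x‖²/2` with orthonormal
`v_1, …, v_m`, `F` attains its global minimum at `x* = -(1/√m) Σ_i v_i` with
`F(x*) = -1/2`, and every `x` with `|⟨x, v_i⟩| ≤ 1/(4√m)` for at least `m/2` of the
indices satisfies `F(x) ≥ -23/64`, hence `F(x) - F(x*) ≥ 9/64`. -/
theorem stmt_18 {d : ℕ} (m : ℕ) (hm : 1 ≤ m)
    (v : ℕ → EuclideanSpace ℝ (Fin d))
    (hnorm : ∀ i < m, ‖v i‖ = 1)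
    (horth : ∀ i < m, ∀ j < m, i ≠ j → ⟪v i, v j⟫ = 0)
    (F : EuclideanSpace ℝ (Fin d) → ℝ)
    (hF : ∀ x, F x = (1 / Real.sqrt m) * (∑ i ∈ Finset.range m, ⟪x, v i⟫)
      + ‖x‖ ^ 2 / 2)
    (xstar : EuclideanSpace ℝ (Fin d))
    (hxstar : xstar = -((1 / Real.sqrt m) • ∑ i ∈ Finset.range m, v i)) :
    IsMinOn F Set.univ xstar ∧
    F xstar = -(1 / 2) ∧
    (∀ x : EuclideanSpace ℝ (Fin d),
      (∃ S ⊆ Finset.range m, (m : ℝ) / 2 ≤ S.card ∧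
        ∀ i ∈ S, |⟪x, v i⟫| ≤ 1 / (4 * Real.sqrt m)) →
      F x ≥ -(23 / 64) ∧ F x - F xstar ≥ 9 / 64) := by
  have hm0 : (0 : ℝ) < m := by exact_mod_cast hm
  have hsm : (0 : ℝ) < Real.sqrt m := Real.sqrt_pos.mpr hm0
  have hsq : Real.sqrt m ^ 2 = (m : ℝ) := Real.sq_sqrt hm0.le
  set u : EuclideanSpace ℝ (Fin d) :=
    (1 / Real.sqrt m) • ∑ i ∈ Finset.range m, v i with hu
  -- norm of u
  have hsum : ⟪(∑ i ∈ Finset.range m, v i), (∑ j ∈ Finset.range m, v j)⟫ = (m : ℝ) := by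
    rw [inner_sum]
    rw [Finset.sum_congr rfl (fun j hj => sum_inner _ _ _)]
    have : ∀ j ∈ Finset.range m,
        (∑ i ∈ Finset.range m, ⟪v i, v j⟫) = 1 := by
      intro j hj
      rw [Finset.mem_range] at hj
      rw [Finset.sum_eq_single j]
      · rw [real_inner_self_eq_norm_sq, hnorm j hj]; norm_num
      · intro i hi hij
        exact horth i (Finset.mem_range.mp hi) j hj hij
      · intro h; exact absurd (Finset.mem_range.mpr hj) h
    rw [Finset.sum_congr rfl this]
    simp
  have hu1 : ‖u‖ ^ 2 = 1 := by
    rw [← real_inner_self_eq_norm_sq, hu, real_inner_smul_left, real_inner_smul_right, hsum]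
    have hms : Real.sqrt m * Real.sqrt m = (m : ℝ) := Real.mul_self_sqrt hm0.le
    field_simp
    exact hsq.symm
  -- inner with u
  have hxu : ∀ x : EuclideanSpace ℝ (Fin d),
      ⟪x, u⟫ = (1 / Real.sqrt m) * (∑ i ∈ Finset.range m, ⟪x, v i⟫) := by
    intro x
    rw [hu, real_inner_smul_right, inner_sum]
  -- key identity
  have key : ∀ x : EuclideanSpace ℝ (Fin d), F x = (‖x + u‖ ^ 2 - 1) / 2 := by
    intro x
    have h1 : ‖x + u‖ ^ 2 = ‖x‖ ^ 2 + 2 * ⟪x, u⟫ + ‖u‖ ^ 2 := norm_add_sq_real x u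
    rw [hF x, ← hxu x]
    rw [h1, hu1]; ring
  have hxstar' : xstar = -u := by rw [hxstar, hu]
  have hFstar : F xstar = -(1 / 2) := by
    rw [key, hxstar', neg_add_cancel, norm_zero]; norm_num
  refine ⟨?_, hFstar, ?_⟩
  · intro x _
    simp only [Set.mem_setOf_eq]
    rw [key x, hFstar]
    nlinarith [sq_nonneg ‖x + u‖]
  · intro x ⟨S, hS, hcard, hsmall⟩
    -- orthonormal family on Fin m
    have hon : Orthonormal ℝ (fun i : Fin m => v i) := by
      constructor
      · intro i; exact hnorm i i.2
      · intro i j hij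
        exact horth i i.2 j j.2 (fun h => hij (Fin.ext h))
    have hSlt : ∀ i ∈ S, i < m := fun i hi => Finset.mem_range.mp (hS hi)
    -- Bessel
    have bessel := hon.sum_inner_products_le (𝕜 := ℝ) (x + u) (s := S.attachFin hSlt)
    have hbes : ∑ i ∈ S, ⟪v i, x + u⟫ ^ 2 ≤ ‖x + u‖ ^ 2 := by
      refine le_trans (le_of_eq ?_) bessel
      rw [eq_comm]
      refine Finset.sum_bij (fun (i : Fin m) _ => (i : ℕ)) ?_ ?_ ?_ ?_
      · intro a ha; exact (Finset.mem_attachFin _).mp ha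
      · intro a _ b _ h; exact Fin.ext h
      · intro b hb; exact ⟨⟨b, hSlt b hb⟩, (Finset.mem_attachFin _).mpr hb, rfl⟩
      · intro a _; rw [Real.norm_eq_abs, sq_abs]
    -- lower bound each term
    have hterm : ∀ i ∈ S, (9 : ℝ) / (16 * m) ≤ ⟪v i, x + u⟫ ^ 2 := by
      intro i hi
      have him : i < m := hSlt i hi
      have huv : ⟪u, v i⟫ = 1 / Real.sqrt m := by
        rw [hu, real_inner_smul_left, sum_inner, Finset.sum_eq_single i]
        · rw [real_inner_self_eq_norm_sq, hnorm i him]; norm_num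
        · intro j hj hji
          exact horth j (Finset.mem_range.mp hj) i him hji
        · intro h; exact absurd (Finset.mem_range.mpr him) h
      have hinner : ⟪v i, x + u⟫ = ⟪x, v i⟫ + 1 / Real.sqrt m := by
        rw [real_inner_comm, inner_add_left, huv]
      have habs := hsmall i hi
      have h34 : (3 : ℝ) / (4 * Real.sqrt m) ≤ ⟪v i, x + u⟫ := by
        rw [hinner]
        have hlow : -(1 / (4 * Real.sqrt m)) ≤ ⟪x, v i⟫ := (abs_le.mp habs).1
        have heq : (3:ℝ)/(4*Real.sqrt m) = -(1/(4*Real.sqrt m)) + 1/Real.sqrt m := by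
          field_simp; ring
        rw [heq]
        linarith
      have h0 : (0:ℝ) ≤ 3 / (4 * Real.sqrt m) := by positivity
      have h2 : (3 / (4 * Real.sqrt m))^2 ≤ ⟪v i, x + u⟫ ^ 2 := pow_le_pow_left₀ h0 h34 2
      have h3 : ((3:ℝ) / (4 * Real.sqrt m))^2 = 9 / (16 * m) := by
        rw [div_pow, mul_pow, hsq]; norm_num
      linarith
    have hsumlb : (S.card : ℝ) * (9 / (16 * m)) ≤ ∑ i ∈ S, ⟪v i, x + u⟫ ^ 2 := by
      calc (S.card : ℝ) * (9 / (16 * m)) = ∑ _i ∈ S, (9 : ℝ) / (16 * m) := by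
            rw [Finset.sum_const, nsmul_eq_mul]
        _ ≤ _ := Finset.sum_le_sum hterm
    have hlb : (9 : ℝ) / 32 ≤ ‖x + u‖ ^ 2 := by
      have h1 : (m : ℝ) / 2 * (9 / (16 * m)) ≤ (S.card : ℝ) * (9 / (16 * m)) := by
        apply mul_le_mul_of_nonneg_right hcard
        positivity
      have h2 : (m : ℝ) / 2 * (9 / (16 * m)) = 9 / 32 := by field_simp; ring
      linarith
    constructor
    · rw [key x]; linarith
    · rw [key x, hFstar]; linarith
end

section
/- Let k ≥ 1 be an integer, let v_0, v_1, …, v_k be orthonormal vectors in E, let a ∈ ℝ and c > 0, and define F(x) = (1/32)·( ⟨x,v₀⟩² − 2a⟨x,v₀⟩ + Σ_{r=1}^k φ_c(⟨x,v_{r−1}⟩ − ⟨x,v_r⟩) + φ_c(⟨x,v_k⟩) ) and, for 1 ≤ t ≤ k, the quadratic truncation Q_t(x) = (1/32)·( ⟨x,v₀⟩² − 2a⟨x,v₀⟩ + Σ_{r=1}^t (⟨x,v_{r−1}⟩ − ⟨x,v_r⟩)² + ⟨x,v_t⟩² ). Then for every integer t with 1 ≤ t ≤ k and every x ∈ E satisfying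 |⟨x, v_r⟩| < c/2 for all r with t ≤ r ≤ k, one has Q_t(x) − (t+1)c²/16 ≤ F(x) ≤ Q_t(x). -/
open scoped RealInnerProductSpace

/-- For the smoothed construction
`F(x) = (1/32)(⟨x,v₀⟩² - 2a⟨x,v₀⟩ + Σ_{r=1}^k φ_c(⟨x,v_{r-1}⟩ - ⟨x,v_r⟩) + φ_c(⟨x,v_k⟩))`
and its quadratic truncation
`Q_t(x) = (1/32)(⟨x,v₀⟩² - 2a⟨x,v₀⟩ + Σ_{r=1}^t (⟨x,v_{r-1}⟩ - ⟨x,v_r⟩)² + ⟨x,v_t⟩²)`,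
if `1 ≤ t ≤ k` and `|⟨x, v_r⟩| < c/2` for all `t ≤ r ≤ k`, then
`Q_t(x) - (t+1)c²/16 ≤ F(x) ≤ Q_t(x)`. -/
theorem stmt_19 {d : ℕ} (k : ℕ) (hk : 1 ≤ k)
    (v : ℕ → EuclideanSpace ℝ (Fin d))
    (hnorm : ∀ i ≤ k, ‖v i‖ = 1)
    (horth : ∀ i ≤ k, ∀ j ≤ k, i ≠ j → ⟪v i, v j⟫ = 0)
    (a c : ℝ) (hc : 0 < c)
    (φ : ℝ → ℝ)
    (hφ : ∀ z, φ z =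
      if |z| ≤ c then 0
      else if |z| ≤ 2 * c then 2 * (|z| - c) ^ 2
      else z ^ 2 - 2 * c ^ 2)
    (F : EuclideanSpace ℝ (Fin d) → ℝ)
    (hF : ∀ x, F x = (1 / 32) * (⟪x, v 0⟫ ^ 2 - 2 * a * ⟪x, v 0⟫ +
      (∑ r ∈ Finset.Icc 1 k, φ (⟪x, v (r - 1)⟫ - ⟪x, v r⟫)) + φ ⟪x, v k⟫))
    (Q : ℕ → EuclideanSpace ℝ (Fin d) → ℝ)
    (hQ : ∀ t, 1 ≤ t → t ≤ k → ∀ x, Q t x =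
      (1 / 32) * (⟪x, v 0⟫ ^ 2 - 2 * a * ⟪x, v 0⟫ +
        (∑ r ∈ Finset.Icc 1 t, (⟪x, v (r - 1)⟫ - ⟪x, v r⟫) ^ 2) + ⟪x, v t⟫ ^ 2)) :
    ∀ t, 1 ≤ t → t ≤ k → ∀ x : EuclideanSpace ℝ (Fin d),
      (∀ r, t ≤ r → r ≤ k → |⟪x, v r⟫| < c / 2) →
      Q t x - ((t : ℝ) + 1) * c ^ 2 / 16 ≤ F x ∧ F x ≤ Q t x := by

  intro t ht htk x hx
  have hφle : ∀ z : ℝ, φ z ≤ z ^ 2 := by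
    intro z
    rw [hφ z]
    split_ifs with h1 h2
    · positivity
    · push_neg at h1
      nlinarith [sq_abs z, mul_nonneg (by linarith : (0:ℝ) ≤ |z| - c)
        (by linarith : (0:ℝ) ≤ 2*c - |z|)]
    · nlinarith [hc.le, sq_nonneg c]
  have hφge : ∀ z : ℝ, z ^ 2 - 2 * c ^ 2 ≤ φ z := by
    intro z
    rw [hφ z]
    split_ifs with h1 h2
    · nlinarith [sq_abs z, abs_nonneg z]
    · nlinarith [sq_abs z, sq_nonneg (|z| - 2*c)]
    · linarith
  have hφ0 : ∀ z : ℝ, |z| ≤ c → φ z = 0 := by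
    intro z h; rw [hφ z]; simp [h]
  have hmid : ∀ r ∈ Finset.Ioc t k, φ (⟪x, v (r - 1)⟫ - ⟪x, v r⟫) = 0 := by
    intro r hr
    rw [Finset.mem_Ioc] at hr
    apply hφ0
    have h1 := hx (r-1) (by omega) (by omega)
    have h2 := hx r (by omega) hr.2
    calc |⟪x, v (r - 1)⟫ - ⟪x, v r⟫| ≤ |⟪x, v (r - 1)⟫| + |⟪x, v r⟫| := abs_sub _ _
    _ ≤ c := by linarith
  have hsum : ∑ r ∈ Finset.Icc 1 k, φ (⟪x, v (r - 1)⟫ - ⟪x, v r⟫)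
      = ∑ r ∈ Finset.Icc 1 t, φ (⟪x, v (r - 1)⟫ - ⟪x, v r⟫) := by
    rw [show Finset.Icc 1 k = Finset.Ioc 0 k from (Finset.Icc_add_one_left_eq_Ioc 0 k),
        show Finset.Icc 1 t = Finset.Ioc 0 t from (Finset.Icc_add_one_left_eq_Ioc 0 t),
        ← Finset.sum_Ioc_consecutive _ (Nat.zero_le t) htk,
        Finset.sum_eq_zero hmid, add_zero]
  have hφk : φ ⟪x, v k⟫ = 0 := hφ0 _ (by have := hx k htk le_rfl; linarith)
  have hxt : |⟪x, v t⟫| < c/2 := hx t le_rfl htk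
  have hup : ∑ r ∈ Finset.Icc 1 t, φ (⟪x, v (r - 1)⟫ - ⟪x, v r⟫)
      ≤ ∑ r ∈ Finset.Icc 1 t, (⟪x, v (r - 1)⟫ - ⟪x, v r⟫) ^ 2 :=
    Finset.sum_le_sum fun r _ => hφle _
  have hlo : (∑ r ∈ Finset.Icc 1 t, (⟪x, v (r - 1)⟫ - ⟪x, v r⟫) ^ 2) - t * (2*c^2)
      ≤ ∑ r ∈ Finset.Icc 1 t, φ (⟪x, v (r - 1)⟫ - ⟪x, v r⟫) := by
    have h := Finset.sum_le_sum
      (fun r (_ : r ∈ Finset.Icc 1 t) => hφge (⟪x, v (r - 1)⟫ - ⟪x, v r⟫))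
    rw [Finset.sum_sub_distrib, Finset.sum_const, Nat.card_Icc] at h
    simp only [Nat.add_sub_cancel, nsmul_eq_mul] at h
    linarith
  rw [hF, hQ t ht htk, hsum, hφk]
  constructor
  · nlinarith [sq_abs (⟪x, v t⟫), abs_nonneg (⟪x, v t⟫), hc, sq_nonneg c]
  · nlinarith [sq_nonneg (⟪x, v t⟫)]
end
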